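/- arXiv:1411.1211 — 10 statements merged into one kernel-verified Lean document; each statement's English description precedes it below -/
import Mathlib

section
/- Let the state space S = {1,…,n}, the nonempty finite action sets A_i and B_{i,a}, and the transition probability vectors P_i^{ab} be fixed, and let the transition payments vary. Then the following are equivalent: (1) for every choice of transition payments r = (r_i^{ab}), the Shapley operator T_r has an eigenpair, i.e. there exist u ∈ ℝⁿ and λ ∈ ℝ with T_r(u) = λ𝟏 + u; (2) every fixed point of the payment-free Shapley operator F is proportional to the all-ones vector 𝟏 (i.e. F(x) = x implies x = c𝟏 for some c ∈ ℝ). -/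
/-!
Write `F` for the payment-free operator. Every `T_r` and `F` are monotone and commute with adding
multiples of `𝟏`, hence are nonexpansive for the sup norm; `F` is positively homogeneous and
`‖T_r x - F x‖ ≤ ‖r‖`.

If `F x = x`, take the payments `r_i^{ab} = x_i`: the orbit of `0` under `T_r` is `k • x`, while an
eigenpair `(u, λ)` gives the orbit `u + kλ𝟏`. Nonexpansiveness keeps the two orbits a bounded
distance apart, so `x = λ𝟏`.

Conversely, if the fixed points of `F` are constant, compactness of the unit sphere of `ℝⁿ / ℝ𝟏`
and homogeneity give `κ > 0` with `κ ‖[x]‖ ≤ ‖F x - x‖`. Along the orbit of `0` under `T_r` the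
displacement `‖T_r y - y‖` does not increase, so `‖F y - y‖` stays bounded and the orbit is
bounded in `ℝⁿ / ℝ𝟏`. A nonexpansive self-map of a finite-dimensional normed space with a bounded
orbit has a fixed point (a limit of fixed points of the contractions `c • f` as `c → 1`), and a
fixed point `[u]` of the map induced by `T_r` on `ℝⁿ / ℝ𝟏` is an eigenvector: `T_r u - u ∈ ℝ𝟏`.
-/

open Filter Topology

/-- The Shapley operator of a zero-sum perfect-information stochastic game with
state space `Fin n`, action sets `A i` for MIN and `B i a` for MAX,
transition payments `r` and transition probabilities `P`:
`[T(x)]_i = min_a max_b (r_i^{ab} + Σ_j P_{ij}^{ab} x_j)`. -/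
noncomputable def shapley {n : ℕ} {A : Fin n → Type*} {B : ∀ i, A i → Type*}
    [∀ i, Fintype (A i)] [∀ i, Nonempty (A i)]
    [∀ i a, Fintype (B i a)] [∀ i a, Nonempty (B i a)]
    (r : ∀ i (a : A i), B i a → ℝ) (P : ∀ i (a : A i), B i a → Fin n → ℝ) :
    (Fin n → ℝ) → (Fin n → ℝ) :=
  fun x i => ⨅ a : A i, ⨆ b : B i a, (r i a b + ∑ j, P i a b j * x j)

section MinMax

variable {α : Type*} {β : α → Type*}

theorem iInf_iSup_mono [Finite α] [∀ a, Finite (β a)] {f g : ∀ a, β a → ℝ}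
    (h : ∀ a b, f a b ≤ g a b) : ⨅ a, ⨆ b, f a b ≤ ⨅ a, ⨆ b, g a b :=
  ciInf_mono (Finite.bddBelow_range _) fun a => ciSup_mono (Finite.bddAbove_range _) (h a)

theorem iInf_iSup_add_const [Finite α] [Nonempty α] [∀ a, Finite (β a)] [∀ a, Nonempty (β a)]
    (f : ∀ a, β a → ℝ) (c : ℝ) : ⨅ a, ⨆ b, (f a b + c) = (⨅ a, ⨆ b, f a b) + c := by
  simp_rw [← OrderIso.addRight_apply c, ← OrderIso.map_ciSup _ (Finite.bddAbove_range _),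
    ← OrderIso.map_ciInf _ (Finite.bddBelow_range _)]

theorem iInf_iSup_const_mul (f : ∀ a, β a → ℝ) {c : ℝ} (hc : 0 ≤ c) :
    ⨅ a, ⨆ b, c * f a b = c * ⨅ a, ⨆ b, f a b := by
  simp_rw [Real.mul_iInf_of_nonneg hc, Real.mul_iSup_of_nonneg hc]

end MinMax

theorem lipschitzWith_one_of_monotone_of_map_add_const {ι : Type*} [Fintype ι]
    {T : (ι → ℝ) → ι → ℝ} (hmono : Monotone T)
    (hadd : ∀ x (c : ℝ), T (x + c • 1) = T x + c • 1) : LipschitzWith 1 T := by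
  have key : ∀ x y i, T x i ≤ T y i + dist x y := fun x y i => by
    have hle : x ≤ y + dist x y • 1 := fun j => by
      have := (le_abs_self (x j - y j)).trans (dist_le_pi_dist x y j)
      simp only [Pi.add_apply, Pi.smul_apply, Pi.one_apply, smul_eq_mul, mul_one]
      linarith
    simpa [hadd] using hmono hle i
  refine LipschitzWith.of_dist_le_mul fun x y => ?_
  rw [NNReal.coe_one, one_mul, dist_pi_le_iff dist_nonneg]
  intro i
  rw [Real.dist_eq, abs_sub_le_iff]
  constructor
  · linarith [key x y i]
  · linarith [key y x i, dist_comm x y]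

section Shapley

variable {n : ℕ} {A : Fin n → Type*} {B : ∀ i, A i → Type*}
  [∀ i, Fintype (A i)] [∀ i, Nonempty (A i)] [∀ i a, Fintype (B i a)] [∀ i a, Nonempty (B i a)]
  {P : ∀ i (a : A i), B i a → Fin n → ℝ}

theorem shapley_mono (hP0 : ∀ i a b j, 0 ≤ P i a b j) {r r' : ∀ i (a : A i), B i a → ℝ}
    {x y : Fin n → ℝ} (hr : r ≤ r') (hxy : x ≤ y) : shapley r P x ≤ shapley r' P y := fun i =>
  iInf_iSup_mono fun a b => add_le_add (hr i a b) <|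
    Finset.sum_le_sum fun j _ => mul_le_mul_of_nonneg_left (hxy j) (hP0 i a b j)

theorem shapley_add_const (hP1 : ∀ i a b, ∑ j, P i a b j = 1) (r : ∀ i (a : A i), B i a → ℝ)
    (x : Fin n → ℝ) (c : ℝ) : shapley r P (x + c • 1) = shapley r P x + c • 1 := by
  funext i
  have hsum : ∀ a b,
      r i a b + ∑ j, P i a b j * (x j + c) = r i a b + ∑ j, P i a b j * x j + c := fun a b => by
    simp only [mul_add, Finset.sum_add_distrib, ← Finset.sum_mul, hP1, one_mul, add_assoc]
  simp only [shapley, Pi.add_apply, Pi.smul_apply, Pi.one_apply, smul_eq_mul, mul_one]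
  simp_rw [hsum, iInf_iSup_add_const]

theorem shapley_add_mem_span_one (hP1 : ∀ i a b, ∑ j, P i a b j = 1)
    (r : ∀ i (a : A i), B i a → ℝ) (x l : Fin n → ℝ) (hl : l ∈ ℝ ∙ (1 : Fin n → ℝ)) :
    shapley r P (x + l) = shapley r P x + l := by
  obtain ⟨c, rfl⟩ := Submodule.mem_span_singleton.mp hl
  exact shapley_add_const hP1 r x c

theorem lipschitzWith_shapley (hP0 : ∀ i a b j, 0 ≤ P i a b j)
    (hP1 : ∀ i a b, ∑ j, P i a b j = 1) (r : ∀ i (a : A i), B i a → ℝ) :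
    LipschitzWith 1 (shapley r P) :=
  lipschitzWith_one_of_monotone_of_map_add_const (fun _ _ => shapley_mono hP0 le_rfl)
    (shapley_add_const hP1 r)

theorem shapley_zero_smul (x : Fin n → ℝ) {c : ℝ} (hc : 0 ≤ c) :
    shapley (fun _ _ _ => (0 : ℝ)) P (c • x) = c • shapley (fun _ _ _ => (0 : ℝ)) P x := by
  funext i
  simp only [shapley, zero_add, Pi.smul_apply, smul_eq_mul, mul_left_comm _ c, ← Finset.mul_sum]
  exact iInf_iSup_const_mul _ hc

theorem shapley_const_payments (v x : Fin n → ℝ) :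
    shapley (fun i _ _ => v i) P x = v + shapley (fun _ _ _ => (0 : ℝ)) P x := by
  funext i
  simp only [shapley, Pi.add_apply, zero_add]
  simp_rw [add_comm (v i)]
  exact iInf_iSup_add_const _ _

theorem norm_shapley_sub_shapley_zero_le (hP0 : ∀ i a b j, 0 ≤ P i a b j)
    (r : ∀ i (a : A i), B i a → ℝ) (x : Fin n → ℝ) :
    ‖shapley r P x - shapley (fun _ _ _ => (0 : ℝ)) P x‖ ≤ ‖r‖ := by
  have hr : ∀ i a b, |r i a b| ≤ ‖r‖ := fun i a b =>
    (norm_le_pi_norm (r i a) b).trans ((norm_le_pi_norm (r i) a).trans (norm_le_pi_norm r i))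
  have hupper := shapley_mono hP0 (r' := fun _ _ _ => ‖r‖) (fun i a b =>
    (le_abs_self _).trans (hr i a b)) (le_refl x)
  have hlower := shapley_mono hP0 (r := fun _ _ _ => -‖r‖) (fun i a b =>
    neg_le.mp ((neg_le_abs _).trans (hr i a b))) (le_refl x)
  rw [shapley_const_payments (v := fun _ => ‖r‖)] at hupper
  rw [shapley_const_payments (v := fun _ => -‖r‖)] at hlower
  refine (pi_norm_le_iff_of_nonneg (norm_nonneg r)).mpr fun i => ?_
  have hupper_i : shapley r P x i ≤ ‖r‖ + shapley (fun _ _ _ => (0 : ℝ)) P x i := hupper i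
  have hlower_i : -‖r‖ + shapley (fun _ _ _ => (0 : ℝ)) P x i ≤ shapley r P x i := hlower i
  rw [Pi.sub_apply, Real.norm_eq_abs, abs_sub_le_iff]
  constructor <;> linarith

end Shapley

section Nonexpansive

variable {E : Type*} [NormedAddCommGroup E] [NormedSpace ℝ E] {f : E → E}

theorem iterate_eq_add_smul_of_map_add_smul {p v : E}
    (h : ∀ k : ℕ, f (p + (k : ℝ) • v) = p + ((k : ℝ) + 1) • v) (k : ℕ) :
    f^[k] p = p + (k : ℝ) • v := by
  induction k with
  | zero => simp
  | succ k ih => rw [Function.iterate_succ_apply', ih, h, Nat.cast_succ]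

theorem LipschitzWith.eq_of_map_add_smul (hf : LipschitzWith 1 f) {p q v w : E}
    (hp : ∀ k : ℕ, f (p + (k : ℝ) • v) = p + ((k : ℝ) + 1) • v)
    (hq : ∀ k : ℕ, f (q + (k : ℝ) • w) = q + ((k : ℝ) + 1) • w) : v = w := by
  have hbound : ∀ k : ℕ, (k : ℝ) * ‖v - w‖ ≤ 2 * ‖p - q‖ := fun k => by
    have hdist := (hf.iterate k).dist_le_mul p q
    rw [one_pow, NNReal.coe_one, one_mul, iterate_eq_add_smul_of_map_add_smul hp,
      iterate_eq_add_smul_of_map_add_smul hq, dist_eq_norm, dist_eq_norm] at hdist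
    have hsplit : (k : ℝ) • (v - w) = (p + (k : ℝ) • v - (q + (k : ℝ) • w)) - (p - q) := by module
    calc (k : ℝ) * ‖v - w‖ = ‖(k : ℝ) • (v - w)‖ := by rw [norm_smul, Real.norm_natCast]
      _ ≤ ‖p + (k : ℝ) • v - (q + (k : ℝ) • w)‖ + ‖p - q‖ := by
          rw [hsplit]; exact _root_.norm_sub_le _ _
      _ ≤ 2 * ‖p - q‖ := by linarith
  by_contra hne
  have hpos : 0 < ‖v - w‖ := norm_pos_iff.mpr (sub_ne_zero.mpr hne)
  obtain ⟨k, hk⟩ := exists_nat_gt (2 * ‖p - q‖ / ‖v - w‖)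
  exact (hbound k).not_gt ((div_lt_iff₀ hpos).mp hk)

theorem norm_le_of_smul_map_eq (hf : LipschitzWith 1 f) {M : ℝ} (hM : ∀ k, ‖f^[k] 0‖ ≤ M)
    {c : ℝ} (hc0 : 0 ≤ c) (hc1 : c < 1) {y : E} (hy : c • f y = y) : ‖y‖ ≤ 2 * M := by
  -- `‖y - fᵏ 0‖ ≤ c‖y - fᵏ⁻¹ 0‖ + (1 - c)M`, since `y - fᵏ 0 = c(f y - fᵏ 0) - (1 - c)fᵏ 0`
  have hdist : ∀ k : ℕ, ‖y - f^[k] 0‖ ≤ c ^ k * ‖y‖ + M := fun k => by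
    induction k with
    | zero =>
      simp only [Function.iterate_zero, id_eq, sub_zero, pow_zero, one_mul]
      linarith [(norm_nonneg _).trans (hM 0)]
    | succ k ih =>
      have hsplit : y - f^[k + 1] 0 = c • (f y - f (f^[k] 0)) - (1 - c) • f^[k + 1] 0 := by
        rw [Function.iterate_succ_apply']
        nth_rewrite 1 [← hy]
        module
      have hlip : ‖f y - f (f^[k] 0)‖ ≤ ‖y - f^[k] 0‖ := by
        simpa [dist_eq_norm] using hf.dist_le_mul y (f^[k] 0)
      calc ‖y - f^[k + 1] 0‖ ≤ c * ‖f y - f (f^[k] 0)‖ + (1 - c) * ‖f^[k + 1] 0‖ := by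
            rw [hsplit]
            refine (norm_sub_le _ _).trans_eq ?_
            rw [norm_smul, norm_smul, Real.norm_of_nonneg hc0, Real.norm_of_nonneg (by linarith)]
        _ ≤ c * (c ^ k * ‖y‖ + M) + (1 - c) * M := by
            gcongr
            · exact hlip.trans ih
            · exact hM _
        _ = c ^ (k + 1) * ‖y‖ + M := by ring
  have hlim : Tendsto (fun k : ℕ => c ^ k * ‖y‖ + 2 * M) atTop (𝓝 (2 * M)) := by
    simpa using ((tendsto_pow_atTop_nhds_zero_of_lt_one hc0 hc1).mul_const ‖y‖).add_const (2 * M)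
  refine ge_of_tendsto' hlim fun k => ?_
  have := norm_sub_norm_le y (f^[k] 0)
  linarith [hdist k, hM k]

theorem exists_fixedPoint_of_bounded_orbit [FiniteDimensional ℝ E] (hf : LipschitzWith 1 f)
    {M : ℝ} (hM : ∀ k, ‖f^[k] 0‖ ≤ M) : ∃ y, f y = y := by
  have hK : (Metric.closedBall (0 : E) (2 * M)).Nonempty :=
    Metric.nonempty_closedBall.mpr (by linarith [(norm_nonneg _).trans (hM 0)])
  obtain ⟨y, -, hmin⟩ := (isCompact_closedBall (0 : E) (2 * M)).exists_isMinOn hK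
    (continuous_norm.comp (hf.continuous.sub continuous_id)).continuousOn
  -- the fixed point `y_c` of the contraction `c • f` has `‖f y_c - y_c‖ = (1 - c)‖f y_c‖`
  have happrox : ∀ c ∈ Set.Ico (0 : ℝ) 1, ‖f y - y‖ ≤ (1 - c) * (‖f 0‖ + 2 * M) := by
    rintro c ⟨hc0, hc1⟩
    have hcontr : ContractingWith ⟨c, hc0⟩ (fun x => c • f x) := by
      refine ⟨hc1, LipschitzWith.of_dist_le_mul fun x x' => ?_⟩
      rw [dist_smul₀, Real.norm_of_nonneg hc0]
      exact mul_le_mul_of_nonneg_left (by simpa using hf.dist_le_mul x x') hc0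
    set z := ContractingWith.fixedPoint _ hcontr
    have hz : c • f z = z := hcontr.fixedPoint_isFixedPt
    have hzM : ‖z‖ ≤ 2 * M := norm_le_of_smul_map_eq hf hM hc0 hc1 hz
    have hfz : ‖f z‖ ≤ ‖f 0‖ + 2 * M := by
      have := norm_le_norm_add_norm_sub' (f z) (f 0)
      have := hf.dist_le_mul z 0
      simp only [NNReal.coe_one, one_mul, dist_eq_norm, sub_zero] at this
      linarith [norm_sub_rev (f z) (f 0)]
    calc ‖f y - y‖ ≤ ‖f z - z‖ := hmin (by simpa using hzM)
      _ = (1 - c) * ‖f z‖ := by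
          nth_rewrite 2 [← hz]
          rw [show f z - c • f z = (1 - c) • f z by module, norm_smul,
            Real.norm_of_nonneg (by linarith)]
      _ ≤ (1 - c) * (‖f 0‖ + 2 * M) := by gcongr
  have hlim : Tendsto (fun c : ℝ => (1 - c) * (‖f 0‖ + 2 * M)) (𝓝[<] 1) (𝓝 0) := by
    have : Tendsto (fun c : ℝ => (1 - c) * (‖f 0‖ + 2 * M)) (𝓝 1) (𝓝 ((1 - 1) * (‖f 0‖ + 2 * M))) :=
      ((continuous_const.sub continuous_id).mul continuous_const).tendsto 1
    simpa using this.mono_left nhdsWithin_le_nhds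
  have hzero : ‖f y - y‖ ≤ 0 := ge_of_tendsto hlim <| by
    filter_upwards [Ioo_mem_nhdsLT (show (0 : ℝ) < 1 by norm_num)] with c hc
    exact happrox c ⟨hc.1.le, hc.2⟩
  exact ⟨y, sub_eq_zero.mp (norm_le_zero_iff.mp hzero)⟩

end Nonexpansive

section Quotient

variable {E : Type*} [NormedAddCommGroup E] [NormedSpace ℝ E] {L : Submodule ℝ E}

variable (L) in
noncomputable def quotientMap (T : E → E) : E ⧸ L → E ⧸ L := fun q => L.mkQ (T q.out)

theorem quotientMap_mkQ {T : E → E} (hTL : ∀ x, ∀ l ∈ L, T (x + l) = T x + l) (x : E) :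
    quotientMap L T (L.mkQ x) = L.mkQ (T x) := by
  set x' := (L.mkQ x).out
  have hl : x' - x ∈ L := (Submodule.Quotient.eq L).mp (by simp [x'])
  change L.mkQ (T x') = L.mkQ (T x)
  rw [Submodule.mkQ_apply, Submodule.mkQ_apply, Submodule.Quotient.eq,
    ← add_sub_cancel x x', hTL x _ hl, add_sub_cancel_left]
  exact hl

theorem lipschitzWith_quotientMap {T : E → E} (hT : LipschitzWith 1 T)
    (hTL : ∀ x, ∀ l ∈ L, T (x + l) = T x + l) : LipschitzWith 1 (quotientMap L T) := by
  refine LipschitzWith.of_dist_le_mul fun q q' => ?_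
  obtain ⟨x, rfl⟩ := L.mkQ_surjective q
  obtain ⟨y, rfl⟩ := L.mkQ_surjective q'
  rw [quotientMap_mkQ hTL, quotientMap_mkQ hTL, NNReal.coe_one, one_mul, dist_eq_norm,
    dist_eq_norm, ← map_sub, ← map_sub]
  refine le_of_forall_pos_lt_add fun ε hε => ?_
  -- `m ≡ x - y` nearly realizes `‖[x - y]‖`, and `T (x - m) ≡ T y`
  obtain ⟨m, hm, hmε⟩ := Submodule.Quotient.norm_mk_lt (L.mkQ (x - y)) hε
  rw [Submodule.mkQ_apply, Submodule.Quotient.eq] at hm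
  have hl : y - (x - m) ∈ L := by convert hm using 1; abel
  calc ‖L.mkQ (T x - T y)‖ = ‖L.mkQ (T x - T (x - m))‖ := by
        congr 1
        rw [Submodule.mkQ_apply, Submodule.mkQ_apply, Submodule.Quotient.eq,
          ← add_sub_cancel (x - m) y, hTL _ _ hl]
        convert L.neg_mem hl using 1
        abel
    _ ≤ ‖T x - T (x - m)‖ := Submodule.Quotient.norm_mk_le _ _
    _ ≤ ‖m‖ := by simpa [dist_eq_norm] using hT.dist_le_mul x (x - m)
    _ < ‖L.mkQ (x - y)‖ + ε := hmε

theorem exists_map_sub_self_mem_of_bounded_orbit [FiniteDimensional ℝ E] {T : E → E}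
    (hT : LipschitzWith 1 T) (hTL : ∀ x, ∀ l ∈ L, T (x + l) = T x + l) {M : ℝ}
    (hM : ∀ k, ‖L.mkQ (T^[k] 0)‖ ≤ M) : ∃ u, T u - u ∈ L := by
  have : IsClosed (L : Set E) := L.closed_of_finiteDimensional
  have horbit : ∀ k, (quotientMap L T)^[k] 0 = L.mkQ (T^[k] 0) := fun k => by
    induction k with
    | zero => simp
    | succ k ih => rw [Function.iterate_succ_apply', ih, quotientMap_mkQ hTL,
        ← Function.iterate_succ_apply' T]
  obtain ⟨q, hq⟩ := exists_fixedPoint_of_bounded_orbit (lipschitzWith_quotientMap hT hTL)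
    (M := M) fun k => horbit k ▸ hM k
  obtain ⟨u, rfl⟩ := L.mkQ_surjective q
  rw [quotientMap_mkQ hTL] at hq
  exact ⟨u, (Submodule.Quotient.eq L).mp hq⟩

end Quotient

section Recession

variable {E : Type*} [NormedAddCommGroup E] [NormedSpace ℝ E] [FiniteDimensional ℝ E]
  {L : Submodule ℝ E} {F : E → E}

theorem exists_pos_mul_norm_mkQ_le (hF : Continuous F) (hFL : ∀ x, ∀ l ∈ L, F (x + l) = F x + l)
    (hFsmul : ∀ c : ℝ, 0 < c → ∀ x, F (c • x) = c • F x) (hFfix : ∀ x, F x = x → x ∈ L) :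
    ∃ κ > 0, ∀ x, κ * ‖L.mkQ x‖ ≤ ‖F x - x‖ := by
  set K := Metric.closedBall (0 : E) 2 ∩ {x | ‖L.mkQ x‖ = 1}
  have hK : IsCompact K := (isCompact_closedBall 0 2).inter_right
    (isClosed_eq (continuous_norm.comp continuous_quot_mk) continuous_const)
  -- rescale `x` to `[x]` of norm `1`, then pick a representative of norm `< 2`
  have hrepr : ∀ x, 0 < ‖L.mkQ x‖ → ∃ z ∈ K, ‖F x - x‖ = ‖L.mkQ x‖ * ‖F z - z‖ := by
    intro x hx
    set s := ‖L.mkQ x‖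
    have hy : ‖L.mkQ (s⁻¹ • x)‖ = 1 := by
      rw [map_smul, norm_smul, Real.norm_of_nonneg (inv_nonneg.mpr hx.le), inv_mul_cancel₀ hx.ne']
    obtain ⟨z, hz, hz2⟩ := Submodule.Quotient.norm_mk_lt (L.mkQ (s⁻¹ • x)) one_pos
    rw [Submodule.mkQ_apply, Submodule.Quotient.eq] at hz
    rw [hy, one_add_one_eq_two] at hz2
    refine ⟨z, ⟨mem_closedBall_zero_iff.mpr hz2.le, ?_⟩, ?_⟩
    · change ‖L.mkQ z‖ = 1
      rw [← hy, Submodule.mkQ_apply, Submodule.mkQ_apply, (Submodule.Quotient.eq L).mpr hz]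
    · have hFz : F z - z = s⁻¹ • (F x - x) := by
        rw [← add_sub_cancel (s⁻¹ • x) z, hFL _ _ hz, hFsmul _ (inv_pos.mpr hx)]
        module
      rw [hFz, norm_smul, Real.norm_of_nonneg (inv_nonneg.mpr hx.le), mul_inv_cancel_left₀ hx.ne']
  by_cases hL : ∀ x, ‖L.mkQ x‖ = 0
  · exact ⟨1, one_pos, fun x => by rw [hL x, mul_zero]; exact norm_nonneg _⟩
  push Not at hL
  obtain ⟨x₀, hx₀⟩ := hL
  obtain ⟨z₀, hz₀K, -⟩ := hrepr x₀ ((norm_nonneg _).lt_of_ne' hx₀)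
  obtain ⟨z, hzK, hmin⟩ := hK.exists_isMinOn ⟨z₀, hz₀K⟩
    (continuous_norm.comp (hF.sub continuous_id)).continuousOn
  refine ⟨‖F z - z‖, norm_pos_iff.mpr fun hz => ?_, fun x => ?_⟩
  · have h0 : ‖L.mkQ z‖ = 0 := by
      rw [Submodule.mkQ_apply, (Submodule.Quotient.mk_eq_zero L).mpr
        (hFfix z (sub_eq_zero.mp hz)), norm_zero]
    exact zero_ne_one (h0.symm.trans hzK.2)
  rcases (norm_nonneg (L.mkQ x)).eq_or_lt with hx | hx
  · rw [← hx, mul_zero]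
    exact norm_nonneg _
  obtain ⟨z', hz'K, hz'⟩ := hrepr x hx
  rw [hz', mul_comm]
  exact mul_le_mul_of_nonneg_left (hmin hz'K) hx.le

theorem exists_map_sub_self_mem_of_norm_sub_le {T : E → E} (hT : LipschitzWith 1 T)
    (hTL : ∀ x, ∀ l ∈ L, T (x + l) = T x + l) (hF : Continuous F)
    (hFL : ∀ x, ∀ l ∈ L, F (x + l) = F x + l)
    (hFsmul : ∀ c : ℝ, 0 < c → ∀ x, F (c • x) = c • F x) (hFfix : ∀ x, F x = x → x ∈ L)
    {R : ℝ} (hTF : ∀ x, ‖T x - F x‖ ≤ R) : ∃ u, T u - u ∈ L := by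
  obtain ⟨κ, hκ, hκF⟩ := exists_pos_mul_norm_mkQ_le hF hFL hFsmul hFfix
  refine exists_map_sub_self_mem_of_bounded_orbit hT hTL (M := (R + ‖T 0‖) / κ) fun k => ?_
  set y := T^[k] 0
  -- nonexpansiveness makes the displacement `‖T y - y‖` non-increasing along the orbit
  have hdisp : ‖T y - y‖ ≤ ‖T 0‖ := by
    have := (hT.iterate k).dist_le_mul (T 0) 0
    rwa [one_pow, NNReal.coe_one, one_mul, ← Function.iterate_succ_apply,
      Function.iterate_succ_apply', dist_eq_norm, dist_zero_right] at this
  rw [le_div_iff₀ hκ, mul_comm]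
  calc κ * ‖L.mkQ y‖ ≤ ‖F y - y‖ := hκF y
    _ ≤ ‖F y - T y‖ + ‖T y - y‖ := norm_sub_le_norm_sub_add_norm_sub _ _ _
    _ ≤ R + ‖T 0‖ := by rw [norm_sub_rev]; exact add_le_add (hTF y) hdisp

end Recession

/-- with the state space, action sets and transition probabilities fixed,
the Shapley operator `T_r` has an eigenpair for every value of the transition payments
`r` if and only if every fixed point of the payment-free Shapley operator is
proportional to the all-ones vector. -/
theorem shapley_eigenpair_forall_payments_iff_paymentFree_trivial_fixedPoints
    {n : ℕ} {A : Fin n → Type*} {B : ∀ i, A i → Type*}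
    [∀ i, Fintype (A i)] [∀ i, Nonempty (A i)]
    [∀ i a, Fintype (B i a)] [∀ i a, Nonempty (B i a)]
    (P : ∀ i (a : A i), B i a → Fin n → ℝ)
    (hP0 : ∀ i a b j, 0 ≤ P i a b j)
    (hP1 : ∀ i a b, ∑ j, P i a b j = 1) :
    (∀ r : ∀ i (a : A i), B i a → ℝ, ∃ (u : Fin n → ℝ) (lam : ℝ),
        shapley r P u = lam • (1 : Fin n → ℝ) + u) ↔
    (∀ x : Fin n → ℝ, shapley (fun _ _ _ => (0 : ℝ)) P x = x →
        ∃ c : ℝ, x = c • (1 : Fin n → ℝ)) := by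
  constructor
  · intro h x hx
    obtain ⟨u, lam, hu⟩ := h fun i _ _ => x i
    -- with payments `x`, the orbit of `0` is `k • x`, that of `u` is `u + k • lam • 𝟏`
    refine ⟨lam, (lipschitzWith_shapley hP0 hP1 fun i _ _ => x i).eq_of_map_add_smul
      (p := 0) (q := u) (fun k => ?_) (fun k => ?_)⟩
    · rw [zero_add, zero_add, shapley_const_payments, shapley_zero_smul _ k.cast_nonneg, hx]
      module
    · rw [smul_smul, shapley_add_const hP1, hu]
      module
  · intro hfix r
    obtain ⟨u, hu⟩ := exists_map_sub_self_mem_of_norm_sub_le (L := ℝ ∙ (1 : Fin n → ℝ))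
      (lipschitzWith_shapley hP0 hP1 r) (shapley_add_mem_span_one hP1 r)
      (lipschitzWith_shapley hP0 hP1 _).continuous (shapley_add_mem_span_one hP1 _)
      (fun c hc x => shapley_zero_smul x hc.le)
      (fun x hx => (hfix x hx).elim fun c hc => Submodule.mem_span_singleton.mpr ⟨c, hc.symm⟩)
      (norm_shapley_sub_shapley_zero_le hP0 r)
    obtain ⟨lam, hlam⟩ := Submodule.mem_span_singleton.mp hu
    exact ⟨u, lam, by rw [hlam, sub_add_cancel]⟩
end

section
/- Whether a payment-free Shapley operator has only trivial fixed points depends only on the supports of the transition probabilities: if (P_i^{ab}) and (Q_i^{ab}) are two families of transition probability vectors over the same state space S = {1,…,n} and the same action sets, such that for all i, j, a, b one has P_{ij}^{ab} > 0 if and only if Q_{ij}^{ab} > 0, then every fixed point of the payment-free operator F_P is proportional to 𝟏 if and only if every fixed point of the payment-free operator F_Q is proportional to 𝟏. -/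
/-!
Fixed points are all trivial iff there is no pair of disjoint nonempty dominions: a set `T` on
which the maximizer (choosing `b`) can answer every action of the minimizer (choosing `a`) so as
to stay in `T`, and a set `T'` on which the minimizer has an action keeping the play in `T'`
whatever the maximizer does. Dominions only see supports.

A nonconstant fixed point `x` gives the dominions `{x = max x}` and `{x = min x}`, because a
weighted average attains an extremal value only if its support lies where that value is attained.
Conversely, the operator is monotone and maps the order interval between the indicators of `T`
and of `T'ᶜ` into itself, so by Knaster–Tarski it has a fixed point there, equal to `1` on `T`
and `0` on `T'`.
-/

/-- The payment-free Shapley operator associated with transition probabilities `P`: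
`[F(x)]_i = min_a max_b Σ_j P_{ij}^{ab} x_j`. -/
noncomputable def paymentFreeShapley {n : ℕ} {A : Fin n → Type*} {B : ∀ i, A i → Type*}
    [∀ i, Fintype (A i)] [∀ i, Nonempty (A i)]
    [∀ i a, Fintype (B i a)] [∀ i a, Nonempty (B i a)]
    (P : ∀ i (a : A i), B i a → Fin n → ℝ) :
    (Fin n → ℝ) → (Fin n → ℝ) :=
  fun x i => ⨅ a : A i, ⨆ b : B i a, ∑ j, P i a b j * x j

open Finset Function

theorem Monotone.exists_isFixedPt_mem_Icc {α : Type*} [ConditionallyCompleteLattice α]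
    {f : α → α} (hf : Monotone f) {l u : α} (hlu : l ≤ u) (hl : l ≤ f l) (hu : f u ≤ u) :
    ∃ x ∈ Set.Icc l u, IsFixedPt f x := by
  have : Fact (l ≤ u) := ⟨hlu⟩
  let g : Set.Icc l u →o Set.Icc l u :=
    ⟨fun x => ⟨f x, hl.trans (hf x.2.1), (hf x.2.2).trans hu⟩, fun _ _ h => hf h⟩
  exact ⟨g.lfp, g.lfp.2, congrArg Subtype.val g.map_lfp⟩

section WeightedSum

variable {ι : Type*} [Fintype ι] {p x : ι → ℝ} {c : ℝ}

theorem sum_mul_eq_zero_iff_of_nonneg (hp : ∀ j, 0 ≤ p j) (hx : ∀ j, 0 ≤ x j) :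
    ∑ j, p j * x j = 0 ↔ ∀ j, 0 < p j → x j = 0 := by
  rw [Finset.sum_eq_zero_iff_of_nonneg fun j _ => mul_nonneg (hp j) (hx j)]
  refine ⟨fun h j hpj => ?_, fun h j _ => ?_⟩
  · exact (mul_eq_zero.mp (h j (mem_univ j))).resolve_left hpj.ne'
  · rcases (hp j).eq_or_lt with hpj | hpj
    · rw [← hpj, zero_mul]
    · rw [h j hpj, mul_zero]

theorem sum_mul_const_of_mem_stdSimplex (hp : p ∈ stdSimplex ℝ ι) (c : ℝ) :
    ∑ j, p j * c = c := by
  rw [← Finset.sum_mul, hp.2, one_mul]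

theorem sum_mul_le_of_le (hp : p ∈ stdSimplex ℝ ι) (hx : ∀ j, x j ≤ c) :
    ∑ j, p j * x j ≤ c :=
  (sum_le_sum fun j _ => mul_le_mul_of_nonneg_left (hx j) (hp.1 j)).trans_eq
    (sum_mul_const_of_mem_stdSimplex hp c)

theorem le_sum_mul_of_le (hp : p ∈ stdSimplex ℝ ι) (hx : ∀ j, c ≤ x j) :
    c ≤ ∑ j, p j * x j :=
  (sum_mul_const_of_mem_stdSimplex hp c).symm.trans_le
    (sum_le_sum fun j _ => mul_le_mul_of_nonneg_left (hx j) (hp.1 j))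

theorem sum_mul_eq_iff_of_le (hp : p ∈ stdSimplex ℝ ι) (hx : ∀ j, x j ≤ c) :
    ∑ j, p j * x j = c ↔ ∀ j, 0 < p j → x j = c := by
  have key := sum_mul_eq_zero_iff_of_nonneg hp.1 (x := fun j => c - x j)
    fun j => sub_nonneg.mpr (hx j)
  simp only [mul_sub, Finset.sum_sub_distrib, sum_mul_const_of_mem_stdSimplex hp, sub_eq_zero]
    at key
  simp only [key, eq_comm]

theorem sum_mul_eq_iff_of_ge (hp : p ∈ stdSimplex ℝ ι) (hx : ∀ j, c ≤ x j) :
    ∑ j, p j * x j = c ↔ ∀ j, 0 < p j → x j = c := by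
  have key := sum_mul_eq_zero_iff_of_nonneg hp.1 (x := fun j => x j - c)
    fun j => sub_nonneg.mpr (hx j)
  simpa only [mul_sub, Finset.sum_sub_distrib, sum_mul_const_of_mem_stdSimplex hp, sub_eq_zero]
    using key

end WeightedSum

section Dominion

variable {n : ℕ} {A : Fin n → Type*} {B : ∀ i, A i → Type*}
    (P : ∀ i (a : A i), B i a → Fin n → ℝ)

def IsMaxDominion (T : Set (Fin n)) : Prop :=
  ∀ i ∈ T, ∀ a, ∃ b, ∀ j, 0 < P i a b j → j ∈ T

def IsMinDominion (T : Set (Fin n)) : Prop :=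
  ∀ i ∈ T, ∃ a, ∀ b, ∀ j, 0 < P i a b j → j ∈ T

variable {P} in
theorem isMaxDominion_congr {Q : ∀ i (a : A i), B i a → Fin n → ℝ}
    (hsupp : ∀ i a b j, 0 < P i a b j ↔ 0 < Q i a b j) {T : Set (Fin n)} :
    IsMaxDominion P T ↔ IsMaxDominion Q T := by
  simp only [IsMaxDominion, hsupp]

variable {P} in
theorem isMinDominion_congr {Q : ∀ i (a : A i), B i a → Fin n → ℝ}
    (hsupp : ∀ i a b j, 0 < P i a b j ↔ 0 < Q i a b j) {T : Set (Fin n)} :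
    IsMinDominion P T ↔ IsMinDominion Q T := by
  simp only [IsMinDominion, hsupp]

end Dominion

section PaymentFreeShapley

variable {n : ℕ} {A : Fin n → Type*} {B : ∀ i, A i → Type*}
    [∀ i, Fintype (A i)] [∀ i, Nonempty (A i)]
    [∀ i a, Fintype (B i a)] [∀ i a, Nonempty (B i a)]
    {P : ∀ i (a : A i), B i a → Fin n → ℝ}

theorem paymentFreeShapley_apply_eq_inf'_sup' (P : ∀ i (a : A i), B i a → Fin n → ℝ)
    (x : Fin n → ℝ) (i : Fin n) :
    paymentFreeShapley P x i =
      univ.inf' univ_nonempty fun a => univ.sup' univ_nonempty fun b => ∑ j, P i a b j * x j := by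
  simp only [inf'_univ_eq_ciInf, sup'_univ_eq_ciSup, paymentFreeShapley]

theorem le_paymentFreeShapley_apply_iff {x : Fin n → ℝ} {i : Fin n} {c : ℝ} :
    c ≤ paymentFreeShapley P x i ↔ ∀ a, ∃ b, c ≤ ∑ j, P i a b j * x j := by
  simp [paymentFreeShapley_apply_eq_inf'_sup']

theorem paymentFreeShapley_apply_le_iff {x : Fin n → ℝ} {i : Fin n} {c : ℝ} :
    paymentFreeShapley P x i ≤ c ↔ ∃ a, ∀ b, ∑ j, P i a b j * x j ≤ c := by
  simp [paymentFreeShapley_apply_eq_inf'_sup']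

theorem monotone_paymentFreeShapley (hP : ∀ i a b, P i a b ∈ stdSimplex ℝ (Fin n)) :
    Monotone (paymentFreeShapley P) := fun _ _ hxy i =>
  ciInf_mono (Finite.bddBelow_range _) fun a => ciSup_mono (Finite.bddAbove_range _) fun b =>
    sum_le_sum fun j _ => mul_le_mul_of_nonneg_left (hxy j) ((hP i a b).1 j)

theorem paymentFreeShapley_const (hP : ∀ i a b, P i a b ∈ stdSimplex ℝ (Fin n)) (c : ℝ) :
    paymentFreeShapley P (fun _ => c) = fun _ => c := by
  funext i
  simp only [paymentFreeShapley, sum_mul_const_of_mem_stdSimplex (hP _ _ _), ciSup_const,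
    ciInf_const]

theorem paymentFreeShapley_apply_le_of_le (hP : ∀ i a b, P i a b ∈ stdSimplex ℝ (Fin n))
    {x : Fin n → ℝ} {c : ℝ} (hx : ∀ j, x j ≤ c) (i : Fin n) : paymentFreeShapley P x i ≤ c := by
  simpa only [paymentFreeShapley_const hP] using
    monotone_paymentFreeShapley hP (show x ≤ fun _ => c from hx) i

theorem le_paymentFreeShapley_apply_of_le (hP : ∀ i a b, P i a b ∈ stdSimplex ℝ (Fin n))
    {x : Fin n → ℝ} {c : ℝ} (hx : ∀ j, c ≤ x j) (i : Fin n) : c ≤ paymentFreeShapley P x i := by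
  simpa only [paymentFreeShapley_const hP] using
    monotone_paymentFreeShapley hP (show (fun _ => c) ≤ x from hx) i

theorem isMaxDominion_setOf_eq_of_le (hP : ∀ i a b, P i a b ∈ stdSimplex ℝ (Fin n))
    {x : Fin n → ℝ} (hx : paymentFreeShapley P x = x) {M : ℝ} (hM : ∀ j, x j ≤ M) :
    IsMaxDominion P {i | x i = M} := by
  intro i (hi : x i = M) a
  obtain ⟨b, hb⟩ := le_paymentFreeShapley_apply_iff.mp (by rw [hx, hi]) a
  exact ⟨b, (sum_mul_eq_iff_of_le (hP i a b) hM).mp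
    ((sum_mul_le_of_le (hP i a b) hM).antisymm hb)⟩

theorem isMinDominion_setOf_eq_of_ge (hP : ∀ i a b, P i a b ∈ stdSimplex ℝ (Fin n))
    {x : Fin n → ℝ} (hx : paymentFreeShapley P x = x) {m : ℝ} (hm : ∀ j, m ≤ x j) :
    IsMinDominion P {i | x i = m} := by
  intro i (hi : x i = m)
  obtain ⟨a, ha⟩ := paymentFreeShapley_apply_le_iff.mp (by rw [hx, hi])
  exact ⟨a, fun b => (sum_mul_eq_iff_of_ge (hP i a b) hm).mp
    ((ha b).antisymm (le_sum_mul_of_le (hP i a b) hm))⟩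

theorem IsMaxDominion.indicator_le_paymentFreeShapley
    (hP : ∀ i a b, P i a b ∈ stdSimplex ℝ (Fin n)) {T : Set (Fin n)} (hT : IsMaxDominion P T) :
    T.indicator 1 ≤ paymentFreeShapley P (T.indicator 1) := by
  intro i
  by_cases hi : i ∈ T
  · rw [Set.indicator_of_mem hi, Pi.one_apply, le_paymentFreeShapley_apply_iff]
    intro a
    obtain ⟨b, hb⟩ := hT i hi a
    refine ⟨b, ((sum_mul_eq_iff_of_le (hP i a b) fun j => ?_).mpr fun j hj => ?_).ge⟩
    · exact Set.indicator_apply_le' (fun _ => le_rfl) fun _ => zero_le_one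
    · rw [Set.indicator_of_mem (hb j hj), Pi.one_apply]
  · rw [Set.indicator_of_notMem hi]
    exact le_paymentFreeShapley_apply_of_le hP (Set.indicator_nonneg fun _ _ => zero_le_one) i

theorem IsMinDominion.paymentFreeShapley_le_indicator_compl
    (hP : ∀ i a b, P i a b ∈ stdSimplex ℝ (Fin n)) {T : Set (Fin n)} (hT : IsMinDominion P T) :
    paymentFreeShapley P (Tᶜ.indicator 1) ≤ Tᶜ.indicator 1 := by
  intro i
  by_cases hi : i ∈ T
  · rw [Set.indicator_of_notMem (Set.notMem_compl_iff.mpr hi), paymentFreeShapley_apply_le_iff]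
    obtain ⟨a, ha⟩ := hT i hi
    refine ⟨a, fun b => ((sum_mul_eq_iff_of_ge (hP i a b) fun j => ?_).mpr fun j hj => ?_).le⟩
    · exact Set.indicator_nonneg (fun _ _ => zero_le_one) j
    · exact Set.indicator_of_notMem (Set.notMem_compl_iff.mpr (ha b j hj)) _
  · rw [Set.indicator_of_mem (Set.mem_compl hi), Pi.one_apply]
    exact paymentFreeShapley_apply_le_of_le hP (Set.indicator_le_self' fun _ _ => zero_le_one) i

theorem exists_nontrivial_fixedPoint_of_dominions (hP : ∀ i a b, P i a b ∈ stdSimplex ℝ (Fin n))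
    {T T' : Set (Fin n)} (hT : T.Nonempty) (hT' : T'.Nonempty) (hTT' : Disjoint T T')
    (hmax : IsMaxDominion P T) (hmin : IsMinDominion P T') :
    ∃ x : Fin n → ℝ, paymentFreeShapley P x = x ∧ ¬ ∃ c : ℝ, x = c • (1 : Fin n → ℝ) := by
  have hlu : T.indicator (1 : Fin n → ℝ) ≤ T'ᶜ.indicator 1 :=
    Set.indicator_le_indicator_of_subset hTT'.subset_compl_right fun _ => zero_le_one
  obtain ⟨x, ⟨hlx, hxu⟩, hx⟩ := (monotone_paymentFreeShapley hP).exists_isFixedPt_mem_Icc hlu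
    (hmax.indicator_le_paymentFreeShapley hP) (hmin.paymentFreeShapley_le_indicator_compl hP)
  refine ⟨x, hx, ?_⟩
  rintro ⟨c, rfl⟩
  obtain ⟨i, hi⟩ := hT
  obtain ⟨i', hi'⟩ := hT'
  have h1 : 1 ≤ c := by simpa [Set.indicator_of_mem hi] using hlx i
  have h0 : c ≤ 0 := by
    simpa [Set.indicator_of_notMem (Set.notMem_compl_iff.mpr hi')] using hxu i'
  linarith

theorem exists_dominions_of_nontrivial_fixedPoint (hP : ∀ i a b, P i a b ∈ stdSimplex ℝ (Fin n))
    {x : Fin n → ℝ} (hx : paymentFreeShapley P x = x) (hnc : ¬ ∃ c : ℝ, x = c • (1 : Fin n → ℝ)) :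
    ∃ T T' : Set (Fin n), T.Nonempty ∧ T'.Nonempty ∧ Disjoint T T' ∧
      IsMaxDominion P T ∧ IsMinDominion P T' := by
  have : Nonempty (Fin n) := by
    by_contra h
    exact hnc ⟨0, funext fun i => (h ⟨i⟩).elim⟩
  obtain ⟨imax, hmax⟩ := Finite.exists_max x
  obtain ⟨imin, hmin⟩ := Finite.exists_min x
  have hne : x imin ≠ x imax := fun h =>
    hnc ⟨x imax, funext fun j => by simpa using (hmax j).antisymm (h ▸ hmin j)⟩
  refine ⟨{i | x i = x imax}, {i | x i = x imin}, ⟨imax, rfl⟩, ⟨imin, rfl⟩, ?_,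
    isMaxDominion_setOf_eq_of_le hP hx hmax, isMinDominion_setOf_eq_of_ge hP hx hmin⟩
  exact Set.disjoint_left.mpr fun i (hi : x i = _) (hi' : x i = _) => hne (hi'.symm.trans hi)

theorem fixedPoints_trivial_iff_not_exists_dominions
    (hP : ∀ i a b, P i a b ∈ stdSimplex ℝ (Fin n)) :
    (∀ x : Fin n → ℝ, paymentFreeShapley P x = x → ∃ c : ℝ, x = c • (1 : Fin n → ℝ)) ↔
      ¬ ∃ T T' : Set (Fin n), T.Nonempty ∧ T'.Nonempty ∧ Disjoint T T' ∧
        IsMaxDominion P T ∧ IsMinDominion P T' := by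
  constructor
  · rintro htriv ⟨T, T', hT, hT', hTT', hmax, hmin⟩
    obtain ⟨x, hx, hnc⟩ := exists_nontrivial_fixedPoint_of_dominions hP hT hT' hTT' hmax hmin
    exact hnc (htriv x hx)
  · intro hno x hx
    by_contra hnc
    exact hno (exists_dominions_of_nontrivial_fixedPoint hP hx hnc)

end PaymentFreeShapley

/-- whether a payment-free Shapley operator has only trivial fixed points
(fixed points proportional to the all-ones vector) depends only on the supports of the
transition probabilities. -/
theorem paymentFree_trivial_fixedPoints_depends_only_on_support
    {n : ℕ} {A : Fin n → Type*} {B : ∀ i, A i → Type*}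
    [∀ i, Fintype (A i)] [∀ i, Nonempty (A i)]
    [∀ i a, Fintype (B i a)] [∀ i a, Nonempty (B i a)]
    (P Q : ∀ i (a : A i), B i a → Fin n → ℝ)
    (hP0 : ∀ i a b j, 0 ≤ P i a b j) (hP1 : ∀ i a b, ∑ j, P i a b j = 1)
    (hQ0 : ∀ i a b j, 0 ≤ Q i a b j) (hQ1 : ∀ i a b, ∑ j, Q i a b j = 1)
    (hsupp : ∀ i a b j, 0 < P i a b j ↔ 0 < Q i a b j) :
    (∀ x : Fin n → ℝ, paymentFreeShapley P x = x → ∃ c : ℝ, x = c • (1 : Fin n → ℝ)) ↔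
    (∀ x : Fin n → ℝ, paymentFreeShapley Q x = x → ∃ c : ℝ, x = c • (1 : Fin n → ℝ)) := by
  rw [fixedPoints_trivial_iff_not_exists_dominions fun i a b => ⟨hP0 i a b, hP1 i a b⟩,
    fixedPoints_trivial_iff_not_exists_dominions fun i a b => ⟨hQ0 i a b, hQ1 i a b⟩]
  simp only [isMaxDominion_congr hsupp, isMinDominion_congr hsupp]
end

section
/- Fix the state space, the finite action sets, and the transition probabilities, and identify the space of transition payments with ℝ^q, where q is the number of triples (i,a,b) with i ∈ S, a ∈ A_i, b ∈ B_{i,a}. Assume that for every transition payment r ∈ ℝ^q the Shapley operator T_r has an eigenpair. Then there exist finitely many nonzero linear functionals φ_1,…,φ_m on ℝ^q such that for every r ∈ ℝ^q with φ_k(r) ≠ 0 for all k = 1,…,m, the eigenvector of T_r is unique up to an additive constant: any two vectors u, v ∈ ℝⁿ satisfying T_r(u) = λ𝟏 + u and T_r(v) = μ𝟏 + v (for scalars λ, μ) differ by a constant multiple of 𝟏. -/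
open Matrix

lemma Submodule.exists_fin_family_le_ker_of_ne_top {K V ι : Type*} [Field K] [AddCommGroup V]
    [Module K V] [Finite ι] (W : ι → Submodule K V) :
    ∃ (m : ℕ) (φ : Fin m → V →ₗ[K] K),
      (∀ k, φ k ≠ 0) ∧ ∀ i, W i ≠ ⊤ → ∃ k, W i ≤ LinearMap.ker (φ k) := by
  obtain ⟨m, ⟨e⟩⟩ := Finite.exists_equiv_fin {i // W i ≠ ⊤}
  choose φ hφ0 hφ using fun i : {i // W i ≠ ⊤} => (W i).exists_le_ker_of_lt_top i.2.lt_top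
  exact ⟨m, fun k => φ (e.symm k), fun k => hφ0 _,
    fun i hi => ⟨e ⟨i, hi⟩, by simpa using hφ ⟨i, hi⟩⟩⟩

section BiasEquation

variable {ι : Type*} [Fintype ι]

lemma dotProduct_le_of_le {p x : ι → ℝ} {c : ℝ} (hp : p ∈ stdSimplex ℝ ι)
    (hx : ∀ j, p j ≠ 0 → x j ≤ c) : p ⬝ᵥ x ≤ c := by
  calc p ⬝ᵥ x ≤ ∑ j, p j * c := by
        refine Finset.sum_le_sum fun j _ => ?_
        by_cases hj : p j = 0
        · simp [hj]
        · exact mul_le_mul_of_nonneg_left (hx j hj) (hp.1 j)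
    _ = c := by rw [← Finset.sum_mul, hp.2, one_mul]

lemma eq_of_le_dotProduct {p x : ι → ℝ} {c : ℝ} (hp : p ∈ stdSimplex ℝ ι)
    (hx : ∀ j, x j ≤ c) (h : c ≤ p ⬝ᵥ x) : ∀ j, p j ≠ 0 → x j = c := by
  have hsum : ∑ j, p j * (c - x j) = 0 := by
    refine le_antisymm ?_ (Finset.sum_nonneg fun j _ => mul_nonneg (hp.1 j) (sub_nonneg.2 (hx j)))
    simp only [mul_sub, Finset.sum_sub_distrib, ← Finset.sum_mul, hp.2, one_mul]
    exact sub_nonpos.2 h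
  intro j hj
  have := (Finset.sum_eq_zero_iff_of_nonneg fun j _ =>
    mul_nonneg (hp.1 j) (sub_nonneg.2 (hx j))).1 hsum j (Finset.mem_univ j)
  linarith [(mul_eq_zero.1 this).resolve_left hj]

variable {M : Matrix ι ι ℝ} {F : Set ι} {ρ u : ι → ℝ} {lam : ℝ}

/-- Evaluate the equation at a state of `F` where `u` is largest. -/
lemma exists_le_of_bias_eq (hM : ∀ i ∈ F, M i ∈ stdSimplex ℝ ι)
    (hF : ∀ i ∈ F, ∀ j, M i j ≠ 0 → j ∈ F) (hne : F.Nonempty)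
    (h : ∀ i ∈ F, lam + u i = ρ i + (M *ᵥ u) i) : ∃ i ∈ F, lam ≤ ρ i := by
  obtain ⟨i, hi, hmax⟩ := F.exists_max_image u F.toFinite hne
  have : (M *ᵥ u) i ≤ u i :=
    dotProduct_le_of_le (hM i hi) fun j hj => hmax j (hF i hi j hj)
  exact ⟨i, hi, by linarith [h i hi]⟩

lemma exists_ge_of_bias_eq (hM : ∀ i ∈ F, M i ∈ stdSimplex ℝ ι)
    (hF : ∀ i ∈ F, ∀ j, M i j ≠ 0 → j ∈ F) (hne : F.Nonempty)
    (h : ∀ i ∈ F, lam + u i = ρ i + (M *ᵥ u) i) : ∃ i ∈ F, ρ i ≤ lam := by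
  have hneg : ∀ i ∈ F, -lam + (-u) i = (-ρ) i + (M *ᵥ -u) i := fun i hi => by
    simp only [Pi.neg_apply, mulVec_neg]
    linarith [h i hi]
  obtain ⟨i, hi, hle⟩ := exists_le_of_bias_eq hM hF hne hneg
  exact ⟨i, hi, by simpa using hle⟩

end BiasEquation

section Policy

variable {n : ℕ} {A : Fin n → Type*} {B : ∀ i, A i → Type*}
  {P : ∀ i (a : A i), B i a → Fin n → ℝ}

variable (A B) in
/-- A pure stationary strategy pair: an action of both players at every state. -/
abbrev Policy := ∀ i, Σ a : A i, B i a

variable (P) in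
def transitionMatrix (σ : Policy A B) : Matrix (Fin n) (Fin n) ℝ :=
  Matrix.of fun i => P i (σ i).1 (σ i).2

def stageReward (r : ∀ i (a : A i), B i a → ℝ) (σ : Policy A B) : Fin n → ℝ :=
  fun i => r i (σ i).1 (σ i).2

variable (P) in
def biasSubmodule (σ τ : Policy A B) (F G : Set (Fin n)) :
    Submodule ℝ (∀ i (a : A i), B i a → ℝ) where
  carrier := {r | ∃ (lam : ℝ) (u v : Fin n → ℝ),
    (∀ i ∈ F, lam + u i = stageReward r σ i + (transitionMatrix P σ *ᵥ u) i) ∧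
    (∀ i ∈ G, lam + v i = stageReward r τ i + (transitionMatrix P τ *ᵥ v) i)}
  zero_mem' := ⟨0, 0, 0, by simp [stageReward], by simp [stageReward]⟩
  add_mem' := by
    rintro r s ⟨lam, u, v, hu, hv⟩ ⟨mu, u', v', hu', hv'⟩
    refine ⟨lam + mu, u + u', v + v', fun i hi => ?_, fun i hi => ?_⟩
    · simp only [stageReward, Pi.add_apply, mulVec_add] at hu hu' ⊢
      linarith [hu i hi, hu' i hi]
    · simp only [stageReward, Pi.add_apply, mulVec_add] at hv hv' ⊢
      linarith [hv i hi, hv' i hi]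
  smul_mem' := by
    rintro c r ⟨lam, u, v, hu, hv⟩
    refine ⟨c * lam, c • u, c • v, fun i hi => ?_, fun i hi => ?_⟩
    · simp only [stageReward, Pi.smul_apply, mulVec_smul, smul_eq_mul] at hu ⊢
      linear_combination c * hu i hi
    · simp only [stageReward, Pi.smul_apply, mulVec_smul, smul_eq_mul] at hv ⊢
      linear_combination c * hv i hi

lemma biasSubmodule_ne_top (hP : ∀ i a b, P i a b ∈ stdSimplex ℝ (Fin n))
    {σ τ : Policy A B} {F G : Set (Fin n)} (hF : F.Nonempty) (hG : G.Nonempty)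
    (hFG : Disjoint F G) (hσ : ∀ i ∈ F, ∀ j, transitionMatrix P σ i j ≠ 0 → j ∈ F)
    (hτ : ∀ i ∈ G, ∀ j, transitionMatrix P τ i j ≠ 0 → j ∈ G) :
    biasSubmodule P σ τ F G ≠ ⊤ := by
  classical
  intro htop
  obtain ⟨lam, u, v, hu, hv⟩ :
      (fun i _ _ => if i ∈ F then 1 else 0 : ∀ i (a : A i), B i a → ℝ) ∈
        biasSubmodule P σ τ F G := htop ▸ Submodule.mem_top
  obtain ⟨i, hi, hle⟩ := exists_ge_of_bias_eq (fun i _ => hP i _ _) hσ hF hu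
  obtain ⟨j, hj, hge⟩ := exists_le_of_bias_eq (fun i _ => hP i _ _) hτ hG hv
  simp only [stageReward, hi, Set.disjoint_right.1 hFG hj, if_true, if_false] at hle hge
  linarith

end Policy

section Game

variable {n : ℕ} {A : Fin n → Type*} {B : ∀ i, A i → Type*}
  [∀ i, Fintype (A i)] [∀ i, Nonempty (A i)]
  [∀ i a, Fintype (B i a)] [∀ i a, Nonempty (B i a)]

lemma exists_shapley_le_and_le_shapley (r : ∀ i (a : A i), B i a → ℝ)
    (P : ∀ i (a : A i), B i a → Fin n → ℝ) (u v : Fin n → ℝ) (i : Fin n) :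
    ∃ (a : A i) (b : B i a), shapley r P u i ≤ r i a b + P i a b ⬝ᵥ u ∧
      r i a b + P i a b ⬝ᵥ v ≤ shapley r P v i := by
  obtain ⟨a, ha⟩ := exists_eq_ciInf_of_finite
    (f := fun a : A i => ⨆ b : B i a, (r i a b + P i a b ⬝ᵥ v))
  obtain ⟨b, hb⟩ := exists_eq_ciSup_of_finite (f := fun b : B i a => r i a b + P i a b ⬝ᵥ u)
  refine ⟨a, b, ?_, ?_⟩
  · exact (ciInf_le (Set.finite_range _).bddBelow a).trans hb.ge
  · exact (le_ciSup (Set.finite_range _).bddAbove b).trans ha.le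

variable {r : ∀ i (a : A i), B i a → ℝ} {P : ∀ i (a : A i), B i a → Fin n → ℝ}
  {u v : Fin n → ℝ} {lam mu : ℝ}

lemma exists_eigen_le_and_le_eigen (hu : shapley r P u = lam • (1 : Fin n → ℝ) + u)
    (hv : shapley r P v = mu • (1 : Fin n → ℝ) + v) (i : Fin n) :
    ∃ (a : A i) (b : B i a), lam + u i ≤ r i a b + P i a b ⬝ᵥ u ∧
      r i a b + P i a b ⬝ᵥ v ≤ mu + v i := by
  simpa [hu, hv] using exists_shapley_le_and_le_shapley r P u v i

lemma eigenvalue_le_of_isMax (hP : ∀ i a b, P i a b ∈ stdSimplex ℝ (Fin n))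
    (hu : shapley r P u = lam • (1 : Fin n → ℝ) + u)
    (hv : shapley r P v = mu • (1 : Fin n → ℝ) + v) {i : Fin n}
    (hi : ∀ j, u j - v j ≤ u i - v i) : lam ≤ mu := by
  obtain ⟨a, b, hau, hbv⟩ := exists_eigen_le_and_le_eigen hu hv i
  have : P i a b ⬝ᵥ (u - v) ≤ u i - v i := dotProduct_le_of_le (hP i a b) fun j _ => hi j
  rw [dotProduct_sub] at this
  linarith

lemma eigenvalue_unique [Nonempty (Fin n)] (hP : ∀ i a b, P i a b ∈ stdSimplex ℝ (Fin n))
    (hu : shapley r P u = lam • (1 : Fin n → ℝ) + u)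
    (hv : shapley r P v = mu • (1 : Fin n → ℝ) + v) : lam = mu := by
  obtain ⟨i, hi⟩ := Finite.exists_max (u - v)
  obtain ⟨j, hj⟩ := Finite.exists_max (v - u)
  exact le_antisymm (eigenvalue_le_of_isMax hP hu hv hi) (eigenvalue_le_of_isMax hP hv hu hj)

lemma exists_optimal_action_of_isMax (hP : ∀ i a b, P i a b ∈ stdSimplex ℝ (Fin n))
    (hu : shapley r P u = lam • (1 : Fin n → ℝ) + u)
    (hv : shapley r P v = lam • (1 : Fin n → ℝ) + v) {i : Fin n}
    (hi : ∀ j, u j - v j ≤ u i - v i) :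
    ∃ (a : A i) (b : B i a), lam + u i = r i a b + P i a b ⬝ᵥ u ∧
      ∀ j, P i a b j ≠ 0 → u j - v j = u i - v i := by
  obtain ⟨a, b, hau, hbv⟩ := exists_eigen_le_and_le_eigen hu hv i
  have hle : P i a b ⬝ᵥ (u - v) ≤ u i - v i := dotProduct_le_of_le (hP i a b) fun j _ => hi j
  rw [dotProduct_sub] at hle
  refine ⟨a, b, by linarith, eq_of_le_dotProduct (x := u - v) (hP i a b) hi ?_⟩
  rw [dotProduct_sub]
  linarith

lemma exists_policy_of_eigen (hP : ∀ i a b, P i a b ∈ stdSimplex ℝ (Fin n))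
    (hu : shapley r P u = lam • (1 : Fin n → ℝ) + u)
    (hv : shapley r P v = lam • (1 : Fin n → ℝ) + v) :
    ∃ σ : Policy A B, ∀ i, (∀ j, u j - v j ≤ u i - v i) →
      lam + u i = stageReward r σ i + (transitionMatrix P σ *ᵥ u) i ∧
      ∀ j, transitionMatrix P σ i j ≠ 0 → ∀ k, u k - v k ≤ u j - v j := by
  have : ∀ i, ∃ s : Σ a : A i, B i a, (∀ j, u j - v j ≤ u i - v i) →
      lam + u i = r i s.1 s.2 + P i s.1 s.2 ⬝ᵥ u ∧
      ∀ j, P i s.1 s.2 j ≠ 0 → ∀ k, u k - v k ≤ u j - v j := by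
    intro i
    by_cases hi : ∀ j, u j - v j ≤ u i - v i
    · obtain ⟨a, b, hau, hab⟩ := exists_optimal_action_of_isMax hP hu hv hi
      exact ⟨⟨a, b⟩, fun _ => ⟨hau, fun j hj k => (hab j hj).symm ▸ hi k⟩⟩
    · exact ⟨⟨Classical.arbitrary _, Classical.arbitrary _⟩, fun h => absurd h hi⟩
  choose σ hσ using this
  exact ⟨σ, hσ⟩

lemma exists_biasSubmodule_ne_top_mem (hP : ∀ i a b, P i a b ∈ stdSimplex ℝ (Fin n))
    (hu : shapley r P u = lam • (1 : Fin n → ℝ) + u)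
    (hv : shapley r P v = mu • (1 : Fin n → ℝ) + v) (hne : ¬∃ c : ℝ, u = v + c • 1) :
    ∃ σ τ F G, r ∈ biasSubmodule P σ τ F G ∧ biasSubmodule P σ τ F G ≠ ⊤ := by
  have : Nonempty (Fin n) := by
    by_contra h
    rw [not_nonempty_iff] at h
    exact hne ⟨0, Subsingleton.elim _ _⟩
  obtain rfl := eigenvalue_unique hP hu hv
  obtain ⟨σ, hσ⟩ := exists_policy_of_eigen hP hu hv
  obtain ⟨τ, hτ⟩ := exists_policy_of_eigen hP hv hu
  refine ⟨σ, τ, {i | ∀ j, u j - v j ≤ u i - v i}, {i | ∀ j, v j - u j ≤ v i - u i},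
    ⟨lam, u, v, fun i hi => (hσ i hi).1, fun i hi => (hτ i hi).1⟩,
    biasSubmodule_ne_top hP (Finite.exists_max (u - v)) (Finite.exists_max (v - u)) ?_
      (fun i hi => (hσ i hi).2) (fun i hi => (hτ i hi).2)⟩
  refine Set.disjoint_left.2 fun i hF hG => hne ⟨u i - v i, funext fun j => ?_⟩
  have := hF j
  have := hG j
  simp only [Pi.add_apply, Pi.smul_apply, Pi.one_apply, smul_eq_mul, mul_one]
  linarith

end Game

theorem generic_uniqueness_of_bias_general
    {n : ℕ} {A : Fin n → Type*} {B : ∀ i, A i → Type*}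
    [∀ i, Fintype (A i)] [∀ i, Nonempty (A i)]
    [∀ i a, Fintype (B i a)] [∀ i a, Nonempty (B i a)]
    (P : ∀ i (a : A i), B i a → Fin n → ℝ)
    (hP0 : ∀ i a b j, 0 ≤ P i a b j)
    (hP1 : ∀ i a b, ∑ j, P i a b j = 1) :
    ∃ (m : ℕ) (φ : Fin m → ((∀ i (a : A i), B i a → ℝ) →ₗ[ℝ] ℝ)),
      (∀ k, φ k ≠ 0) ∧
      ∀ r : ∀ i (a : A i), B i a → ℝ, (∀ k, φ k r ≠ 0) →
        ∀ (u v : Fin n → ℝ) (lam mu : ℝ),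
          shapley r P u = lam • (1 : Fin n → ℝ) + u →
          shapley r P v = mu • (1 : Fin n → ℝ) + v →
          ∃ c : ℝ, u = v + c • (1 : Fin n → ℝ) := by
  have hP : ∀ i a b, P i a b ∈ stdSimplex ℝ (Fin n) := fun i a b => ⟨hP0 i a b, hP1 i a b⟩
  obtain ⟨m, φ, hφ0, hφ⟩ := Submodule.exists_fin_family_le_ker_of_ne_top
    fun d : Policy A B × Policy A B × Set (Fin n) × Set (Fin n) =>
      biasSubmodule P d.1 d.2.1 d.2.2.1 d.2.2.2
  refine ⟨m, φ, hφ0, fun r hr u v lam mu hu hv => ?_⟩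
  by_contra hne
  obtain ⟨σ, τ, F, G, hmem, htop⟩ := exists_biasSubmodule_ne_top_mem hP hu hv hne
  obtain ⟨k, hk⟩ := hφ (σ, τ, F, G) htop
  exact hr k (hk hmem)

/-- generic uniqueness of the bias vector.  Fixing the state space,
action sets and transition probabilities, and assuming that `T_r` has an eigenpair for
every transition payment `r`, there are finitely many nonzero linear functionals
`φ_1, …, φ_m` on the space of transition payments such that whenever `φ_k r ≠ 0` for all
`k`, the eigenvector of `T_r` is unique up to an additive constant. -/
theorem generic_uniqueness_of_bias
    {n : ℕ} {A : Fin n → Type*} {B : ∀ i, A i → Type*}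
    [∀ i, Fintype (A i)] [∀ i, Nonempty (A i)]
    [∀ i a, Fintype (B i a)] [∀ i a, Nonempty (B i a)]
    (P : ∀ i (a : A i), B i a → Fin n → ℝ)
    (hP0 : ∀ i a b j, 0 ≤ P i a b j)
    (hP1 : ∀ i a b, ∑ j, P i a b j = 1)
    (hev : ∀ r : ∀ i (a : A i), B i a → ℝ, ∃ (u : Fin n → ℝ) (lam : ℝ),
        shapley r P u = lam • (1 : Fin n → ℝ) + u) :
    ∃ (m : ℕ) (φ : Fin m → ((∀ i (a : A i), B i a → ℝ) →ₗ[ℝ] ℝ)),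
      (∀ k, φ k ≠ 0) ∧
      ∀ r : ∀ i (a : A i), B i a → ℝ, (∀ k, φ k r ≠ 0) →
        ∀ (u v : Fin n → ℝ) (lam mu : ℝ),
          shapley r P u = lam • (1 : Fin n → ℝ) + u →
          shapley r P v = mu • (1 : Fin n → ℝ) + v →
          ∃ c : ℝ, u = v + c • (1 : Fin n → ℝ) :=
  generic_uniqueness_of_bias_general P hP0 hP1
end

section
/- Let T : ℝⁿ → ℝⁿ be monotone and additively homogeneous. Suppose that for every x ∈ ℝⁿ the limit T̂(x) := lim_{α → +∞} T(αx)/α exists, and that every fixed point of T̂ is proportional to the all-ones vector 𝟏. Then T has an eigenpair, i.e. there exist u ∈ ℝⁿ and λ ∈ ℝ with T(u) = λ𝟏 + u. -/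
/-!
If points `x` with `T x - x` bounded were unbounded modulo constants, normalising them and passing
to a limit would produce a unit vector, vanishing at a fixed coordinate, that is fixed by the
recession function `T̂`. Since `T` is nonexpansive in the sup norm, the orbit of `0` has bounded
displacement, so it stays within bounded distance of the constants. Sub- and superadditivity of
`k ↦ (T^k 0) i₀` then produce a cycle time `λ` with `T^k 0 - kλ𝟏` bounded. The monotone map
`T - λ𝟏` thus has a bounded orbit; the liminf of that orbit is a sub-fixed point, from which the
iterates decrease to a fixed point, i.e. an eigenvector of `T` with eigenvalue `λ`.
-/

open Filter Function Set Topology Bornology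

lemma Subadditive.exists_forall_le_mul_le {a b : ℕ → ℝ} (ha : Subadditive a)
    (hb : Subadditive (-b)) (hba : b ≤ a) :
    ∃ lam : ℝ, ∀ k : ℕ, b k ≤ k * lam ∧ k * lam ≤ a k := by
  have ha0 : 0 ≤ a 0 := by linarith [ha 0 0]
  have hb0 : b 0 ≤ 0 := by have := hb 0 0; simp only [Pi.neg_apply] at this; linarith
  -- `(m + 1) b (k + 1) ≤ b ((m + 1)(k + 1)) ≤ a ((k + 1)(m + 1)) ≤ (k + 1) a (m + 1)`
  have key : ∀ k m : ℕ, b (k + 1) / (k + 1) ≤ a (m + 1) / (m + 1) := by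
    intro k m
    have hbk := hb.apply_mul_add_le m (k + 1) (k + 1)
    have hak := ha.apply_mul_add_le k (m + 1) (m + 1)
    have hmk : m * (k + 1) + (k + 1) = k * (m + 1) + (m + 1) := by ring
    simp only [Pi.neg_apply, hmk] at hbk
    rw [div_le_div_iff₀ (by positivity) (by positivity)]
    nlinarith [hba (k * (m + 1) + (m + 1))]
  have hbdd : BddAbove (range fun k : ℕ => b (k + 1) / (k + 1)) :=
    ⟨a 1, by rintro _ ⟨k, rfl⟩; simpa using key k 0⟩
  refine ⟨⨆ k : ℕ, b (k + 1) / (k + 1), fun k => ?_⟩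
  rcases k with _ | k
  · simpa using ⟨hb0, ha0⟩
  have hpos : (0 : ℝ) < k + 1 := by positivity
  push_cast
  constructor
  · rw [mul_comm, ← div_le_iff₀ hpos]
    exact le_ciSup hbdd k
  · rw [mul_comm, ← le_div_iff₀ hpos]
    exact ciSup_le fun m => key m k

section Order

variable {α : Type*} [ConditionallyCompleteLattice α] [TopologicalSpace α] {f : α → α}

lemma Monotone.exists_isFixedPt_of_map_le [InfConvergenceClass α] [T2Space α] (hmon : Monotone f)
    (hcont : Continuous f) {x : α} (hx : f x ≤ x) (hbdd : BddBelow (range fun k => f^[k] x)) :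
    ∃ u, IsFixedPt f u :=
  ⟨_, isFixedPt_of_tendsto_iterate
    (tendsto_atTop_ciInf (hmon.antitone_iterate_of_map_le hx) hbdd) hcont.continuousAt⟩

/-- The liminf `⨆ k, ⨅ m, f^[k + m] x` of a bounded orbit is a sub-fixed point. -/
lemma Monotone.exists_map_le_of_bddBelow_of_bddAbove [SupConvergenceClass α]
    [OrderClosedTopology α] (hmon : Monotone f) (hcont : Continuous f) {x : α}
    (hlow : BddBelow (range fun k => f^[k] x)) (hup : BddAbove (range fun k => f^[k] x)) :
    ∃ l, f l ≤ l := by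
  set g : ℕ → α := fun k => ⨅ m, f^[k + m] x
  have hg_le : ∀ k m, g k ≤ f^[k + m] x := fun k m =>
    ciInf_le (hlow.mono (range_subset_iff.2 fun m => mem_range_self (k + m))) m
  have hg_mono : Monotone g := monotone_nat_of_le_succ fun k => le_ciInf fun m => by
    simpa only [add_right_comm k 1 m, add_assoc] using hg_le k (m + 1)
  have hfg : ∀ k, f (g k) ≤ g (k + 1) := fun k => le_ciInf fun m => by
    simpa only [← iterate_succ_apply' f, add_right_comm k 1 m] using hmon (hg_le k m)
  have hg_up : BddAbove (range g) := by
    obtain ⟨b, hb⟩ := hup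
    exact ⟨b, by rintro _ ⟨k, rfl⟩; exact (hg_le k 0).trans (hb (mem_range_self _))⟩
  have hg_lim := tendsto_atTop_ciSup hg_mono hg_up
  exact ⟨_, le_of_tendsto_of_tendsto' ((hcont.tendsto _).comp hg_lim)
    ((tendsto_add_atTop_iff_nat 1).2 hg_lim) hfg⟩

end Order

section Recession

variable {E : Type*} [NormedAddCommGroup E] [NormedSpace ℝ E] {T That : E → E}

lemma isFixedPt_recession_of_tendsto {K : NNReal} (hT : LipschitzWith K T) {y : E}
    (hlim : Tendsto (fun α : ℝ => α⁻¹ • T (α • y)) atTop (𝓝 (That y)))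
    {s : ℕ → ℝ} {z : ℕ → E} (hs : Tendsto s atTop atTop) (hz : Tendsto z atTop (𝓝 y))
    {C : ℝ} (hC : ∀ k, dist (T (s k • z k)) (s k • z k) ≤ C) : That y = y := by
  refine tendsto_nhds_unique (hlim.comp hs) (tendsto_iff_dist_tendsto_zero.2 ?_)
  have hdist : Tendsto (fun k => (K + 1) * dist (z k) y + (s k)⁻¹ * C) atTop (𝓝 0) := by
    simpa using ((tendsto_iff_dist_tendsto_zero.1 hz).const_mul _).add
      (hs.inv_tendsto_atTop.mul_const C)
  refine squeeze_zero' (.of_forall fun k => dist_nonneg) ?_ hdist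
  filter_upwards [hs.eventually_gt_atTop 0] with k hk
  have hTsy : dist (T (s k • y)) (s k • y) ≤ (K + 1) * (s k * dist (z k) y) + C := by
    have hsz : dist (s k • z k) (s k • y) = s k * dist (z k) y := by
      rw [dist_smul₀, Real.norm_of_nonneg hk.le]
    calc dist (T (s k • y)) (s k • y)
        ≤ dist (T (s k • y)) (T (s k • z k)) + dist (T (s k • z k)) (s k • z k)
          + dist (s k • z k) (s k • y) := dist_triangle4 _ _ _ _
      _ ≤ K * dist (s k • y) (s k • z k) + C + dist (s k • z k) (s k • y) := by
          gcongr
          · exact hT.dist_le_mul _ _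
          · exact hC k
      _ = (K + 1) * (s k * dist (z k) y) + C := by rw [dist_comm (s k • y), hsz]; ring
  calc dist ((s k)⁻¹ • T (s k • y)) y
        = dist ((s k)⁻¹ • T (s k • y)) ((s k)⁻¹ • s k • y) := by
          rw [inv_smul_smul₀ hk.ne']
    _ = (s k)⁻¹ * dist (T (s k • y)) (s k • y) := by
        rw [dist_smul₀, Real.norm_of_nonneg (inv_nonneg.2 hk.le)]
    _ ≤ (s k)⁻¹ * ((K + 1) * (s k * dist (z k) y) + C) := by gcongr
    _ = (K + 1) * dist (z k) y + (s k)⁻¹ * C := by field_simp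

end Recession

section Topical

variable {ι : Type*} {T : (ι → ℝ) → (ι → ℝ)}

lemma iterate_add_smul_one (hah : ∀ x (c : ℝ), T (x + c • 1) = T x + c • 1) (k : ℕ)
    (x : ι → ℝ) (c : ℝ) : T^[k] (x + c • 1) = T^[k] x + c • 1 :=
  Commute.iterate_left (fun y => hah y c) k x

lemma map_sub_smul_one (hah : ∀ x (c : ℝ), T (x + c • 1) = T x + c • 1) (x : ι → ℝ)
    (c : ℝ) :
    T (x - c • 1) = T x - c • 1 := by
  simpa only [← sub_eq_add_neg, neg_smul] using hah x (-c)

variable [Fintype ι]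

lemma lipschitzWith_one_of_monotone_of_add_smul_one (hmon : Monotone T)
    (hah : ∀ x (c : ℝ), T (x + c • 1) = T x + c • 1) : LipschitzWith 1 T := by
  have key : ∀ x y, T x ≤ T y + dist x y • 1 := fun x y => by
    have hxy : x ≤ y + dist x y • 1 := fun i => by
      have := dist_le_pi_dist x y i
      rw [Real.dist_eq, abs_le] at this
      simp only [Pi.add_apply, Pi.smul_apply, Pi.one_apply, smul_eq_mul, mul_one]
      linarith
    simpa only [hah] using hmon hxy
  refine LipschitzWith.of_dist_le_mul fun x y => ?_
  rw [NNReal.coe_one, one_mul, dist_pi_le_iff dist_nonneg]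
  intro i
  have h₁ := key x y i
  have h₂ := key y x i
  simp only [Pi.add_apply, Pi.smul_apply, Pi.one_apply, smul_eq_mul, mul_one, dist_comm y x]
    at h₁ h₂
  rw [Real.dist_eq, abs_sub_le_iff]
  constructor <;> linarith

lemma exists_isFixedPt_of_isBounded_orbit (hmon : Monotone T)
    (hah : ∀ x (c : ℝ), T (x + c • 1) = T x + c • 1) {x : ι → ℝ}
    (hx : IsBounded (range fun k => T^[k] x)) : ∃ u, IsFixedPt T u := by
  have hcont := (lipschitzWith_one_of_monotone_of_add_smul_one hmon hah).continuous
  obtain ⟨⟨b, hb⟩, hup⟩ := isBounded_iff_bddBelow_bddAbove.1 hx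
  obtain ⟨l, hl⟩ := hmon.exists_map_le_of_bddBelow_of_bddAbove hcont ⟨b, hb⟩ hup
  have hxl : x + (-‖l - x‖) • 1 ≤ l := fun i => by
    have := norm_le_pi_norm (l - x) i
    rw [Pi.sub_apply, Real.norm_eq_abs, abs_le] at this
    simp only [Pi.add_apply, Pi.smul_apply, Pi.one_apply, smul_eq_mul, mul_one]
    linarith
  refine hmon.exists_isFixedPt_of_map_le hcont hl ⟨b + (-‖l - x‖) • 1, ?_⟩
  rintro _ ⟨k, rfl⟩
  calc b + (-‖l - x‖) • 1
      ≤ T^[k] x + (-‖l - x‖) • 1 := add_le_add_left (hb ⟨k, rfl⟩) _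
    _ = T^[k] (x + (-‖l - x‖) • 1) := (iterate_add_smul_one hah k x _).symm
    _ ≤ T^[k] l := hmon.iterate k hxl

lemma exists_eigenpair_of_isBounded_orbit_sub (hmon : Monotone T)
    (hah : ∀ x (c : ℝ), T (x + c • 1) = T x + c • 1) {x : ι → ℝ} {lam : ℝ}
    (hx : IsBounded (range fun k : ℕ => T^[k] x - (k * lam) • 1)) :
    ∃ u, T u = lam • 1 + u := by
  set S : (ι → ℝ) → ι → ℝ := fun y => T y - lam • 1
  have hS_iter : ∀ k, S^[k] x = T^[k] x - (k * lam) • 1 := by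
    intro k
    induction k with
    | zero => simp
    | succ k ih =>
      rw [iterate_succ_apply', ih, iterate_succ_apply']
      simp only [S, map_sub_smul_one hah, Nat.cast_succ, add_mul, one_mul, add_smul]
      abel
  have hS_mon : Monotone S := fun y z h => sub_le_sub_right (hmon h) _
  have hS_ah : ∀ y (c : ℝ), S (y + c • 1) = S y + c • 1 := fun y c => by
    simp only [S, hah]
    abel
  obtain ⟨u, hu⟩ := exists_isFixedPt_of_isBounded_orbit hS_mon hS_ah (x := x)
    (by simpa only [hS_iter] using hx)
  exact ⟨u, sub_eq_iff_eq_add'.1 hu⟩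

lemma exists_norm_sub_smul_one_le_of_dist_map_le (hmon : Monotone T)
    (hah : ∀ x (c : ℝ), T (x + c • 1) = T x + c • 1) {That : (ι → ℝ) → ι → ℝ}
    (hlim : ∀ x, Tendsto (fun α : ℝ => α⁻¹ • T (α • x)) atTop (𝓝 (That x)))
    (htriv : ∀ x, That x = x → ∃ c : ℝ, x = c • 1) (i₀ : ι) (C : ℝ) :
    ∃ R, ∀ x, dist (T x) x ≤ C → ‖x - x i₀ • 1‖ ≤ R := by
  by_contra! h
  choose x hxC hxR using fun k : ℕ => h k
  set z : ℕ → ι → ℝ := fun k => x k - x k i₀ • 1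
  have hs : Tendsto (fun k => ‖z k‖) atTop atTop :=
    tendsto_atTop_mono (fun k => (hxR k).le) tendsto_natCast_atTop_atTop
  have hs_pos : ∀ k, 0 < ‖z k‖ := fun k => (Nat.cast_nonneg k).trans_lt (hxR k)
  have hzC : ∀ k, dist (T (z k)) (z k) ≤ C := fun k => by
    simpa only [z, map_sub_smul_one hah, dist_sub_right] using hxC k
  have hsphere : ∀ k, ‖z k‖⁻¹ • z k ∈ Metric.sphere (0 : ι → ℝ) 1 := fun k => by
    simp [norm_smul, (hs_pos k).ne']
  obtain ⟨y, hy, φ, hφ, hy_lim⟩ := (isCompact_sphere 0 1).tendsto_subseq hsphere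
  have hfix : That y = y :=
    isFixedPt_recession_of_tendsto (lipschitzWith_one_of_monotone_of_add_smul_one hmon hah)
      (hlim y) (hs.comp hφ.tendsto_atTop) hy_lim (C := C) fun k => by
        simpa only [comp_apply, smul_inv_smul₀ (hs_pos (φ k)).ne'] using hzC (φ k)
  obtain ⟨c, rfl⟩ := htriv y hfix
  have hc : c = 0 := by
    have h0 := ((continuous_apply i₀).tendsto _).comp hy_lim
    exact (by simpa [z, comp_def] using h0 : 0 = c).symm
  simp [hc] at hy

lemma exists_eigenpair_of_orbit_bounded_mod_const (hmon : Monotone T)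
    (hah : ∀ x (c : ℝ), T (x + c • 1) = T x + c • 1) {i₀ : ι} {R : ℝ}
    (hR : ∀ k, ‖T^[k] 0 - T^[k] 0 i₀ • 1‖ ≤ R) :
    ∃ (u : ι → ℝ) (lam : ℝ), T u = lam • 1 + u := by
  set a : ℕ → ℝ := fun k => T^[k] 0 i₀
  have hR₀ : 0 ≤ R := (norm_nonneg _).trans (hR 0)
  have hband : ∀ k i, |T^[k] 0 i - a k| ≤ R := fun k i => by
    simpa using (norm_le_pi_norm _ i).trans (hR k)
  have hshift : ∀ l (c : ℝ), T^[l] (c • 1) i₀ = a l + c := fun l c => by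
    simpa using congrFun (iterate_add_smul_one hah l 0 c) i₀
  have hsub : ∀ l j, a (l + j) ≤ a l + a j + R := fun l j => by
    have hj : T^[j] 0 ≤ (a j + R) • 1 := fun i => by
      have := hband j i
      rw [abs_le] at this
      simp only [Pi.smul_apply, Pi.one_apply, smul_eq_mul, mul_one]
      linarith
    have := hmon.iterate l hj i₀
    rw [hshift] at this
    simpa only [a, iterate_add_apply, add_assoc] using this
  have hsup : ∀ l j, a l + a j - R ≤ a (l + j) := fun l j => by
    have hj : (a j - R) • 1 ≤ T^[j] 0 := fun i => by
      have := hband j i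
      rw [abs_le] at this
      simp only [Pi.smul_apply, Pi.one_apply, smul_eq_mul, mul_one]
      linarith
    have := hmon.iterate l hj i₀
    rw [hshift] at this
    simpa only [a, iterate_add_apply, add_sub_assoc] using this
  obtain ⟨lam, hlam⟩ := Subadditive.exists_forall_le_mul_le (a := fun k => a k + R)
    (b := fun k => a k - R) (fun l j => by linarith [hsub l j])
    (fun l j => by simp only [Pi.neg_apply]; linarith [hsup l j]) (fun k => by dsimp only; linarith)
  obtain ⟨u, hu⟩ := exists_eigenpair_of_isBounded_orbit_sub hmon hah (x := 0) (lam := lam) <|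
    isBounded_iff_forall_norm_le.2 ⟨2 * R, by
      rintro _ ⟨k, rfl⟩
      refine (pi_norm_le_iff_of_nonneg (by positivity)).2 fun i => ?_
      have := hband k i
      rw [abs_le] at this
      simp only [Pi.sub_apply, Pi.smul_apply, Pi.one_apply, smul_eq_mul, mul_one, Real.norm_eq_abs,
        abs_le]
      constructor <;> linarith [hlam k]⟩
  exact ⟨u, lam, hu⟩

end Topical

/-- Gaubert–Gunawardena: let `T : ℝⁿ → ℝⁿ` be monotone and additively
homogeneous.  If the recession function `T̂(x) = lim_{α → ∞} T(αx)/α` exists for every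
`x` and has only trivial fixed points (proportional to the all-ones vector), then `T`
has an eigenpair. -/
theorem eigenpair_of_recession_trivial_fixedPoints
    {n : ℕ} (T : (Fin n → ℝ) → (Fin n → ℝ))
    (hmon : Monotone T)
    (hah : ∀ (x : Fin n → ℝ) (c : ℝ), T (x + c • (1 : Fin n → ℝ)) = T x + c • (1 : Fin n → ℝ))
    (That : (Fin n → ℝ) → (Fin n → ℝ))
    (hlim : ∀ x : Fin n → ℝ,
      Tendsto (fun α : ℝ => α⁻¹ • T (α • x)) atTop (nhds (That x)))
    (htriv : ∀ x : Fin n → ℝ, That x = x → ∃ c : ℝ, x = c • (1 : Fin n → ℝ)) :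
    ∃ (u : Fin n → ℝ) (lam : ℝ), T u = lam • (1 : Fin n → ℝ) + u := by
  rcases isEmpty_or_nonempty (Fin n) with _ | ⟨⟨i₀⟩⟩
  · exact ⟨0, 0, Subsingleton.elim _ _⟩
  obtain ⟨R, hR⟩ :=
    exists_norm_sub_smul_one_le_of_dist_map_le hmon hah hlim htriv i₀ (dist (T 0) 0)
  refine exists_eigenpair_of_orbit_bounded_mod_const hmon hah fun k => hR _ ?_
  simpa only [← iterate_succ_apply' T, iterate_succ_apply, one_pow, NNReal.coe_one, one_mul] using
    ((lipschitzWith_one_of_monotone_of_add_smul_one hmon hah).iterate k).dist_le_mul (T 0) 0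
end

section
/- Let F be a payment-free Shapley operator and let I ∈ 𝓕⁻ be such that Φ(I) = ∅, i.e. the only J ∈ 𝓕⁺ with I ∩ J = ∅ is J = ∅. Then F has no fixed point u ∈ ℝⁿ that is not proportional to 𝟏 and satisfies argmin u = I, where argmin u = { i ∈ S : u_i = min_j u_j }. -/
/-- The indicator vector `𝟏_K` of a set of states `K`. -/
noncomputable def indic {n : ℕ} (K : Set (Fin n)) : Fin n → ℝ :=
  K.indicator fun _ => (1 : ℝ)

/-- The family `𝓕⁻ = { I ⊆ S : F(𝟏_{S∖I}) ≤ 𝟏_{S∖I} }`. -/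
def Fminus {n : ℕ} (F : (Fin n → ℝ) → (Fin n → ℝ)) : Set (Set (Fin n)) :=
  {I | F (indic Iᶜ) ≤ indic Iᶜ}

/-- The family `𝓕⁺ = { J ⊆ S : 𝟏_J ≤ F(𝟏_J) }`. -/
def Fplus {n : ℕ} (F : (Fin n → ℝ) → (Fin n → ℝ)) : Set (Set (Fin n)) :=
  {J | indic J ≤ F (indic J)}

/-- `Φ(I)`, the union of all `J ∈ 𝓕⁺` disjoint from `I`. -/
def Phi {n : ℕ} (F : (Fin n → ℝ) → (Fin n → ℝ)) (I : Set (Fin n)) : Set (Fin n) :=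
  ⋃₀ {J | J ∈ Fplus F ∧ I ∩ J = ∅}

/-- `Φ*(J)`, the union of all `I ∈ 𝓕⁻` disjoint from `J`. -/
def PhiStar {n : ℕ} (F : (Fin n → ℝ) → (Fin n → ℝ)) (J : Set (Fin n)) : Set (Fin n) :=
  ⋃₀ {I | I ∈ Fminus F ∧ I ∩ J = ∅}

/-! If `u` is a fixed point and `M = max u`, then at every state of `J = {j | M ≤ u j}`
Player Max can, against every action of Min, keep the whole transition mass inside `J`
(a stochastic average of `u` reaching its maximum only charges maximisers). Hence `J ∈ 𝓕⁺`.
When `u` is not constant, `J` is nonempty and disjoint from `argmin u`, so `J ⊆ Φ(argmin u)`. -/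

lemma sum_mul_indicator_setOf_le_eq_one {ι : Type*} [Fintype ι] {p u : ι → ℝ} {M : ℝ}
    (hp0 : ∀ j, 0 ≤ p j) (hp1 : ∑ j, p j = 1) (hu : ∀ j, u j ≤ M)
    (hM : M ≤ ∑ j, p j * u j) :
    ∑ j, p j * {j | M ≤ u j}.indicator (fun _ => (1 : ℝ)) j = 1 := by
  have hgap : ∑ j, p j * (M - u j) = 0 := by
    have hle : ∑ j, p j * (M - u j) ≤ 0 := by
      simp only [mul_sub, Finset.sum_sub_distrib, ← Finset.sum_mul, hp1, one_mul]
      linarith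
    exact le_antisymm hle (Finset.sum_nonneg fun j _ => mul_nonneg (hp0 j) (sub_nonneg.2 (hu j)))
  have hterm := (Finset.sum_eq_zero_iff_of_nonneg fun j _ =>
    mul_nonneg (hp0 j) (sub_nonneg.2 (hu j))).1 hgap
  refine (Finset.sum_congr rfl fun j _ => ?_).trans hp1
  by_cases hj : M ≤ u j
  · simp [hj]
  · have hpj : p j = 0 := by
      simpa [(sub_pos.2 (not_le.1 hj)).ne'] using hterm j (Finset.mem_univ j)
    simp [hpj]

lemma setOf_forall_le_inter_setOf_le_eq_empty {ι : Type*} {u : ι → ℝ} {M : ℝ}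
    (hnc : ¬ ∃ c : ℝ, u = c • (1 : ι → ℝ)) (hu : ∀ j, u j ≤ M) :
    {i | ∀ j, u i ≤ u j} ∩ {j | M ≤ u j} = ∅ := by
  ext i
  simp only [Set.mem_inter_iff, Set.mem_ofPred_eq, Set.mem_empty_iff_false, iff_false, not_and]
  intro hmin hmax
  refine hnc ⟨u i, funext fun j => ?_⟩
  simpa using le_antisymm ((hu j).trans hmax) (hmin j)

section paymentFreeShapley

variable {n : ℕ} {A : Fin n → Type*} {B : ∀ i, A i → Type*}
  [∀ i, Fintype (A i)] [∀ i, Nonempty (A i)]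
  [∀ i a, Fintype (B i a)] [∀ i a, Nonempty (B i a)]
  {P : ∀ i (a : A i), B i a → Fin n → ℝ}

lemma le_paymentFreeShapley_apply {x : Fin n → ℝ} {i : Fin n} {c : ℝ}
    (h : ∀ a, ∃ b, c ≤ ∑ j, P i a b j * x j) : c ≤ paymentFreeShapley P x i :=
  le_ciInf fun a =>
    let ⟨b, hb⟩ := h a
    le_ciSup_of_le (Finite.bddAbove_range _) b hb

lemma exists_le_sum_of_le_paymentFreeShapley_apply {x : Fin n → ℝ} {i : Fin n} {c : ℝ}
    (h : c ≤ paymentFreeShapley P x i) (a : A i) : ∃ b, c ≤ ∑ j, P i a b j * x j := by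
  obtain ⟨b, hb⟩ := exists_eq_ciSup_of_finite (f := fun b => ∑ j, P i a b j * x j)
  exact ⟨b, hb ▸ h.trans (ciInf_le (Finite.bddBelow_range _) a)⟩

lemma paymentFreeShapley_nonneg (hP0 : ∀ i a b j, 0 ≤ P i a b j) {x : Fin n → ℝ}
    (hx : 0 ≤ x) : 0 ≤ paymentFreeShapley P x := fun _ =>
  le_paymentFreeShapley_apply fun _ =>
    ⟨Classical.arbitrary _, Finset.sum_nonneg fun j _ => mul_nonneg (hP0 _ _ _ j) (hx j)⟩

lemma setOf_le_mem_Fplus_of_isFixedPt (hP0 : ∀ i a b j, 0 ≤ P i a b j)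
    (hP1 : ∀ i a b, ∑ j, P i a b j = 1) {u : Fin n → ℝ}
    (hu : Function.IsFixedPt (paymentFreeShapley P) u) {M : ℝ} (hM : ∀ j, u j ≤ M) :
    {j | M ≤ u j} ∈ Fplus (paymentFreeShapley P) := by
  intro i
  by_cases hi : M ≤ u i
  · rw [indic, Set.indicator_of_mem (s := {j | M ≤ u j}) hi]
    refine le_paymentFreeShapley_apply fun a => ?_
    obtain ⟨b, hb⟩ :=
      exists_le_sum_of_le_paymentFreeShapley_apply (hi.trans_eq (congrFun hu i).symm) a
    exact ⟨b, (sum_mul_indicator_setOf_le_eq_one (hP0 i a b) (hP1 i a b) hM hb).ge⟩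
  · rw [indic, Set.indicator_of_notMem (s := {j | M ≤ u j}) hi]
    exact paymentFreeShapley_nonneg hP0 (Set.indicator_nonneg (fun _ _ => zero_le_one)) i

end paymentFreeShapley

theorem no_nontrivial_fixedPoint_with_argmin_of_Phi_empty_general
    {n : ℕ} {A : Fin n → Type*} {B : ∀ i, A i → Type*}
    [∀ i, Fintype (A i)] [∀ i, Nonempty (A i)]
    [∀ i a, Fintype (B i a)] [∀ i a, Nonempty (B i a)]
    (P : ∀ i (a : A i), B i a → Fin n → ℝ)
    (hP0 : ∀ i a b j, 0 ≤ P i a b j)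
    (hP1 : ∀ i a b, ∑ j, P i a b j = 1)
    (I : Set (Fin n))
    (hPhi : Phi (paymentFreeShapley P) I = ∅) :
    ¬ ∃ u : Fin n → ℝ, paymentFreeShapley P u = u ∧
        (¬ ∃ c : ℝ, u = c • (1 : Fin n → ℝ)) ∧
        {i : Fin n | ∀ j, u i ≤ u j} = I := by
  rintro ⟨u, hfix, hnc, rfl⟩
  have : Nonempty (Fin n) := by
    by_contra h
    exact hnc ⟨0, funext fun i => (h ⟨i⟩).elim⟩
  obtain ⟨i₀, hi₀⟩ := Finite.exists_max u
  have hJ := setOf_le_mem_Fplus_of_isFixedPt hP0 hP1 hfix hi₀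
  have hdisj := setOf_forall_le_inter_setOf_le_eq_empty hnc hi₀
  have hi₀Phi : i₀ ∈ Phi (paymentFreeShapley P) {i | ∀ j, u i ≤ u j} :=
    ⟨_, ⟨hJ, hdisj⟩, le_refl (u i₀)⟩
  simp [hPhi] at hi₀Phi

/-- if `I ∈ 𝓕⁻` and `Φ(I) = ∅`, then the payment-free Shapley operator `F`
has no nontrivial fixed point `u` with `argmin u = I`. -/
theorem no_nontrivial_fixedPoint_with_argmin_of_Phi_empty
    {n : ℕ} {A : Fin n → Type*} {B : ∀ i, A i → Type*}
    [∀ i, Fintype (A i)] [∀ i, Nonempty (A i)]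
    [∀ i a, Fintype (B i a)] [∀ i a, Nonempty (B i a)]
    (P : ∀ i (a : A i), B i a → Fin n → ℝ)
    (hP0 : ∀ i a b j, 0 ≤ P i a b j)
    (hP1 : ∀ i a b, ∑ j, P i a b j = 1)
    (I : Set (Fin n))
    (hI : I ∈ Fminus (paymentFreeShapley P))
    (hPhi : Phi (paymentFreeShapley P) I = ∅) :
    ¬ ∃ u : Fin n → ℝ, paymentFreeShapley P u = u ∧
        (¬ ∃ c : ℝ, u = c • (1 : Fin n → ℝ)) ∧
        {i : Fin n | ∀ j, u i ≤ u j} = I :=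
  no_nontrivial_fixedPoint_with_argmin_of_Phi_empty_general P hP0 hP1 I hPhi
end

section
/- Let F be a payment-free Shapley operator and let I ∈ 𝓕⁻ with I ≠ ∅ and I = Φ*(Φ(I)). Then F has a fixed point u ∈ ℝⁿ satisfying argmin u = I, where argmin u = { i ∈ S : u_i = min_j u_j }. -/
/-!
Start from `x = -𝟏_I`, which satisfies `F x ≤ x` because `I ∈ 𝓕⁻`, and let `u` be the greatest
fixed point of the monotone map `F` below `x` (Knaster–Tarski for the sub-solutions `z ≤ F z`,
`z ≤ x`). With `J = Φ(I) ∈ 𝓕⁺`, the vector `𝟏_J - 1` is such a sub-solution, so `-1 ≤ u`,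
`u = -1` on `I` and `u ≥ 0` on `J`. Rescaling `u + 1` so that it dominates `𝟏` off its zero set
shows that the level set `{u = -1}` of the fixed point lies in `𝓕⁻`; it is disjoint from `J`,
hence contained in `Φ*(J) = I`.
-/

open Set Filter Topology

theorem Monotone.exists_fixedPoint_isGreatest_le {α : Type*} [ConditionallyCompleteLattice α]
    {f : α → α} (hf : Monotone f) {x y : α} (hx : f x ≤ x) (hy : y ≤ f y) (hyx : y ≤ x) :
    ∃ u, f u = u ∧ IsGreatest {z | z ≤ f z ∧ z ≤ x} u := by
  set S := {z | z ≤ f z ∧ z ≤ x}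
  have hS : S.Nonempty := ⟨y, hy, hyx⟩
  have hSbdd : BddAbove S := ⟨x, fun z hz => hz.2⟩
  have hle : sSup S ≤ x := csSup_le hS fun z hz => hz.2
  have hpost : sSup S ≤ f (sSup S) :=
    csSup_le hS fun z hz => hz.1.trans (hf (le_csSup hSbdd hz))
  have hfix : f (sSup S) = sSup S :=
    le_antisymm (le_csSup hSbdd ⟨hf hpost, (hf hle).trans hx⟩) hpost
  exact ⟨sSup S, hfix, ⟨hpost, hle⟩, fun z hz => le_csSup hSbdd hz⟩

theorem exists_pos_le_of_pos {ι : Type*} [Finite ι] (f : ι → ℝ) :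
    ∃ ε > 0, ∀ j, 0 < f j → ε ≤ f j := by
  have h : ∀ᶠ ε in 𝓝[>] (0 : ℝ), ∀ j, 0 < f j → ε ≤ f j :=
    eventually_all.2 fun j => by
      by_cases hj : 0 < f j
      · exact eventually_nhdsWithin_of_eventually_nhds <|
          (eventually_le_nhds hj).mono fun _ h _ => h
      · exact Eventually.of_forall fun _ h => (hj h).elim
  obtain ⟨ε, hε, hεpos⟩ := (h.and self_mem_nhdsWithin).exists
  exact ⟨ε, hεpos, hε⟩

theorem setOf_forall_le_eq {ι : Type*} {u : ι → ℝ} {m : ℝ} (hm : ∀ j, m ≤ u j) {i₀ : ι}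
    (hi₀ : u i₀ = m) : {i | ∀ j, u i ≤ u j} = {i | u i = m} := by
  ext i
  exact ⟨fun h => le_antisymm (hi₀ ▸ h i₀) (hm i), fun h j => h ▸ hm j⟩

section Indic

variable {n : ℕ}

theorem indic_of_mem {K : Set (Fin n)} {i : Fin n} (h : i ∈ K) : indic K i = 1 :=
  indicator_of_mem h _

theorem indic_of_notMem {K : Set (Fin n)} {i : Fin n} (h : i ∉ K) : indic K i = 0 :=
  indicator_of_notMem h _

theorem indic_nonneg (K : Set (Fin n)) : 0 ≤ indic K :=
  indicator_nonneg fun _ _ => zero_le_one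

theorem indic_le_one (K : Set (Fin n)) : indic K ≤ fun _ => 1 :=
  indicator_le_self' fun _ _ => zero_le_one

theorem indic_mono {K L : Set (Fin n)} (h : K ⊆ L) : indic K ≤ indic L :=
  indicator_le_indicator_of_subset h fun _ => zero_le_one

theorem indic_compl (K : Set (Fin n)) : indic Kᶜ = -indic K + fun _ => 1 := by
  funext i
  by_cases hi : i ∈ K <;> simp [indic, hi]

end Indic

section MonotoneHomogeneous

variable {n : ℕ} {F : (Fin n → ℝ) → (Fin n → ℝ)}

theorem map_const_of_add_const (hadd : ∀ x (c : ℝ), F (x + fun _ => c) = F x + fun _ => c)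
    (h0 : F 0 = 0) (c : ℝ) : F (fun _ => c) = fun _ => c := by
  simpa [h0] using hadd 0 c

theorem map_neg_indic_le_of_mem_Fminus
    (hadd : ∀ x (c : ℝ), F (x + fun _ => c) = F x + fun _ => c) {I : Set (Fin n)}
    (hI : I ∈ Fminus F) : F (-indic I) ≤ -indic I := by
  have h : F (indic Iᶜ) ≤ indic Iᶜ := hI
  rwa [indic_compl, hadd, add_le_add_iff_right] at h

theorem sUnion_mem_Fplus (hmono : Monotone F) (h0 : 0 ≤ F 0) {𝒥 : Set (Set (Fin n))}
    (h𝒥 : 𝒥 ⊆ Fplus F) : ⋃₀ 𝒥 ∈ Fplus F := by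
  intro i
  by_cases hi : i ∈ ⋃₀ 𝒥
  · obtain ⟨J, hJ, hiJ⟩ := mem_sUnion.1 hi
    calc indic (⋃₀ 𝒥) i = indic J i := by rw [indic_of_mem hi, indic_of_mem hiJ]
      _ ≤ F (indic J) i := h𝒥 hJ i
      _ ≤ F (indic (⋃₀ 𝒥)) i := hmono (indic_mono (subset_sUnion_of_mem hJ)) i
  · rw [indic_of_notMem hi]
    exact (h0 i).trans (hmono (indic_nonneg _) i)

theorem Phi_mem_Fplus (hmono : Monotone F) (h0 : 0 ≤ F 0) (I : Set (Fin n)) :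
    Phi F I ∈ Fplus F :=
  sUnion_mem_Fplus hmono h0 fun _ hJ => hJ.1

theorem inter_Phi_eq_empty (I : Set (Fin n)) : I ∩ Phi F I = ∅ :=
  eq_empty_of_forall_notMem fun _ ⟨hiI, _, ⟨_, hIJ⟩, hiJ⟩ => hIJ.subset ⟨hiI, hiJ⟩

theorem setOf_eq_mem_Fminus_of_map_eq (hmono : Monotone F)
    (hadd : ∀ x (c : ℝ), F (x + fun _ => c) = F x + fun _ => c)
    (hsmul : ∀ (a : ℝ) x, 0 ≤ a → F (a • x) = a • F x) {u : Fin n → ℝ} (hu : F u = u)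
    {m : ℝ} (hm : ∀ j, m ≤ u j) : {i | u i = m} ∈ Fminus F := by
  set K := {i | u i = m}
  obtain ⟨ε, hε, hεle⟩ := exists_pos_le_of_pos (u + fun _ => -m)
  set v := ε⁻¹ • (u + fun _ => -m)
  have hv : F v = v := by rw [hsmul _ _ (inv_nonneg.2 hε.le), hadd, hu]
  have hKc : indic Kᶜ ≤ v := fun j => by
    have hmj : 0 ≤ u j + -m := by linarith [hm j]
    by_cases hj : j ∈ K
    · rw [indic_of_notMem (notMem_compl_iff.2 hj)]
      exact mul_nonneg (inv_nonneg.2 hε.le) hmj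
    · rw [indic_of_mem hj]
      have hlt : 0 < u j + -m := lt_of_le_of_ne hmj fun h => hj (show u j = m by linarith)
      exact (le_inv_mul_iff₀ hε).2 (by simpa using hεle j hlt)
  have hconst := map_const_of_add_const hadd (by simpa using hsmul 0 0 le_rfl)
  intro i
  by_cases hi : i ∈ K
  · calc F (indic Kᶜ) i ≤ F v i := hmono hKc i
      _ = v i := congrFun hv i
      _ = 0 := by simp [v, show u i = m from hi]
      _ = indic Kᶜ i := (indic_of_notMem (notMem_compl_iff.2 hi)).symm
  · calc F (indic Kᶜ) i ≤ F (fun _ => 1) i := hmono (indic_le_one _) i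
      _ = indic Kᶜ i := by rw [hconst, indic_of_mem hi]

end MonotoneHomogeneous

theorem exists_fixedPoint_setOf_forall_le_eq_of_closed {n : ℕ}
    {F : (Fin n → ℝ) → (Fin n → ℝ)} (hmono : Monotone F)
    (hadd : ∀ x (c : ℝ), F (x + fun _ => c) = F x + fun _ => c)
    (hsmul : ∀ (a : ℝ) x, 0 ≤ a → F (a • x) = a • F x) {I : Set (Fin n)}
    (hI : I ∈ Fminus F) (hIne : I.Nonempty) (hclosed : I = PhiStar F (Phi F I)) :
    ∃ u : Fin n → ℝ, F u = u ∧ {i : Fin n | ∀ j, u i ≤ u j} = I := by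
  have h0 : F 0 = 0 := by simpa using hsmul 0 0 le_rfl
  set J := Phi F I
  set y : Fin n → ℝ := indic J + fun _ => -1
  have hy : y ≤ F y := by
    rw [hadd]
    exact add_le_add_left (show indic J ≤ F (indic J) from Phi_mem_Fplus hmono h0.ge I) _
  have hyI : y ≤ -indic I := fun i => by
    by_cases hi : i ∈ I
    · have hiJ : i ∉ J := fun hiJ => (inter_Phi_eq_empty I).subset ⟨hi, hiJ⟩
      simp [y, indic_of_mem hi, indic_of_notMem hiJ]
    · simp [y, indic_of_notMem hi, indic_le_one J i]
  obtain ⟨u, hu, ⟨-, hu_le⟩, hu_greatest⟩ :=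
    hmono.exists_fixedPoint_isGreatest_le (map_neg_indic_le_of_mem_Fminus hadd hI) hy hyI
  have hyu : y ≤ u := hu_greatest ⟨hy, hyI⟩
  have hu_ge : ∀ j, -1 ≤ u j := fun j => by
    linarith [show indic J j - 1 ≤ u j from hyu j, show 0 ≤ indic J j from indic_nonneg J j]
  have hu_I : ∀ i ∈ I, u i = -1 := fun i hi =>
    le_antisymm (by simpa [indic_of_mem hi] using hu_le i) (hu_ge i)
  have hu_J : ∀ i ∈ J, 0 ≤ u i := fun i hi => by simpa [y, indic_of_mem hi] using hyu i
  have hK : {i | u i = -1} = I := by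
    refine Subset.antisymm ?_ hu_I
    rw [hclosed]
    refine subset_sUnion_of_mem ⟨setOf_eq_mem_Fminus_of_map_eq hmono hadd hsmul hu hu_ge, ?_⟩
    exact eq_empty_of_forall_notMem fun i ⟨hiK, hiJ⟩ => by
      linarith [hu_J i hiJ, show u i = -1 from hiK]
  obtain ⟨i₀, hi₀⟩ := hIne
  exact ⟨u, hu, (setOf_forall_le_eq hu_ge (hu_I i₀ hi₀)).trans hK⟩

section PaymentFreeShapley

variable {n : ℕ} {A : Fin n → Type*} {B : ∀ i, A i → Type*}
    [∀ i, Fintype (A i)] [∀ i, Nonempty (A i)]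
    [∀ i a, Fintype (B i a)] [∀ i a, Nonempty (B i a)]
    {P : ∀ i (a : A i), B i a → Fin n → ℝ}

theorem paymentFreeShapley_monotone (hP0 : ∀ i a b j, 0 ≤ P i a b j) :
    Monotone (paymentFreeShapley P) := fun _ _ h i =>
  ciInf_mono (finite_range _).bddBelow fun a => ciSup_mono (finite_range _).bddAbove fun b =>
    Finset.sum_le_sum fun j _ => mul_le_mul_of_nonneg_left (h j) (hP0 i a b j)

theorem paymentFreeShapley_add_const (hP1 : ∀ i a b, ∑ j, P i a b j = 1)
    (x : Fin n → ℝ) (c : ℝ) :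
    paymentFreeShapley P (x + fun _ => c) = paymentFreeShapley P x + fun _ => c := by
  funext i
  have hsum : ∀ a b, ∑ j, P i a b j * (x j + c) = ∑ j, P i a b j * x j + c := fun a b => by
    simp [mul_add, Finset.sum_add_distrib, ← Finset.sum_mul, hP1]
  simp only [paymentFreeShapley, Pi.add_apply, hsum, ← ciSup_add (finite_range _).bddAbove,
    ← ciInf_add (finite_range _).bddBelow]

theorem paymentFreeShapley_smul (a : ℝ) (x : Fin n → ℝ) (ha : 0 ≤ a) :
    paymentFreeShapley P (a • x) = a • paymentFreeShapley P x := by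
  funext i
  simp only [paymentFreeShapley, Pi.smul_apply, smul_eq_mul, mul_left_comm _ a, ← Finset.mul_sum,
    Real.mul_iSup_of_nonneg ha, Real.mul_iInf_of_nonneg ha]

end PaymentFreeShapley

/-- if `I ∈ 𝓕⁻` is nonempty and closed for the Galois connection,
i.e. `I = Φ*(Φ(I))`, then the payment-free Shapley operator `F` has a fixed point `u`
with `argmin u = I`. -/
theorem exists_fixedPoint_with_argmin_of_closed
    {n : ℕ} {A : Fin n → Type*} {B : ∀ i, A i → Type*}
    [∀ i, Fintype (A i)] [∀ i, Nonempty (A i)]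
    [∀ i a, Fintype (B i a)] [∀ i a, Nonempty (B i a)]
    (P : ∀ i (a : A i), B i a → Fin n → ℝ)
    (hP0 : ∀ i a b j, 0 ≤ P i a b j)
    (hP1 : ∀ i a b, ∑ j, P i a b j = 1)
    (I : Set (Fin n))
    (hI : I ∈ Fminus (paymentFreeShapley P))
    (hIne : I ≠ ∅)
    (hclosed : I = PhiStar (paymentFreeShapley P) (Phi (paymentFreeShapley P) I)) :
    ∃ u : Fin n → ℝ, paymentFreeShapley P u = u ∧
      {i : Fin n | ∀ j, u i ≤ u j} = I :=
  exists_fixedPoint_setOf_forall_le_eq_of_closed (paymentFreeShapley_monotone hP0)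
    (paymentFreeShapley_add_const hP1) paymentFreeShapley_smul hI
    (nonempty_iff_ne_empty.2 hIne) hclosed
end

section
/- The families 𝓕⁻ and 𝓕⁺ of invariant faces of a payment-free Shapley operator are uniquely determined by the supports of the transition probabilities: if (P_i^{ab}) and (Q_i^{ab}) are two families of transition probability vectors over the same state space and action sets with P_{ij}^{ab} > 0 if and only if Q_{ij}^{ab} > 0 for all i, j, a, b, then 𝓕⁻(F_P) = 𝓕⁻(F_Q) and 𝓕⁺(F_P) = 𝓕⁺(F_Q). -/
/-! Every row `P_i^{ab}` is a probability vector, so `⟨P_i^{ab}, 𝟏_K⟩ ∈ [0, 1]`, with value `0`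
exactly when the support of `P_i^{ab}` misses `K` and value `1` exactly when it lies in `K`.
Hence `F_P(𝟏_K)` takes values in `[0, 1]`, and membership in `𝓕⁻` or `𝓕⁺` only constrains the
coordinates where the min-max must reach `0` or `1`; there it becomes a quantified statement
about supports, which `P` and `Q` share. -/

namespace Finite

variable {ι α : Type*} [Finite ι] [Nonempty ι] [ConditionallyCompleteLinearOrder α]
  {f : ι → α} {c : α}

theorem ciInf_le_iff : ⨅ i, f i ≤ c ↔ ∃ i, f i ≤ c := by
  refine ⟨fun h => ?_, fun ⟨i, hi⟩ => ciInf_le_of_le i hi⟩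
  obtain ⟨i, hi⟩ := exists_eq_ciInf_of_finite (f := f)
  exact ⟨i, hi ▸ h⟩

theorem le_ciSup_iff : c ≤ ⨆ i, f i ↔ ∃ i, c ≤ f i :=
  ciInf_le_iff (α := αᵒᵈ)

end Finite

section StochasticVector

variable {ι : Type*} [Fintype ι] {p : ι → ℝ}

theorem sum_mul_indicator_nonneg (hp0 : ∀ j, 0 ≤ p j) (K : Set ι) :
    0 ≤ ∑ j, p j * K.indicator (fun _ => 1) j :=
  Finset.sum_nonneg fun j _ =>
    mul_nonneg (hp0 j) (Set.indicator_nonneg (fun _ _ => zero_le_one) j)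

theorem sum_mul_indicator_le_zero_iff (hp0 : ∀ j, 0 ≤ p j) (K : Set ι) :
    ∑ j, p j * K.indicator (fun _ => 1) j ≤ 0 ↔ ∀ j, 0 < p j → j ∉ K := by
  have hterm : ∀ j ∈ Finset.univ, 0 ≤ p j * K.indicator (fun _ => 1) j := fun j _ =>
    mul_nonneg (hp0 j) (Set.indicator_nonneg (fun _ _ => zero_le_one) j)
  rw [(Finset.sum_nonneg hterm).ge_iff_eq', Finset.sum_eq_zero_iff_of_nonneg hterm]
  refine forall_congr' fun j => ?_
  by_cases hj : j ∈ K <;> simp [hj, (hp0 j).lt_iff_ne']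

theorem sum_mul_indicator_add_sum_mul_indicator_compl (K : Set ι) :
    ∑ j, p j * K.indicator (fun _ => 1) j + ∑ j, p j * Kᶜ.indicator (fun _ => 1) j =
      ∑ j, p j := by
  rw [← Finset.sum_add_distrib]
  refine Finset.sum_congr rfl fun j _ => ?_
  rw [← mul_add, Set.indicator_self_add_compl_apply, mul_one]

theorem sum_mul_indicator_le_one (hp0 : ∀ j, 0 ≤ p j) (hp1 : ∑ j, p j = 1) (K : Set ι) :
    ∑ j, p j * K.indicator (fun _ => 1) j ≤ 1 := by
  have := sum_mul_indicator_add_sum_mul_indicator_compl (p := p) K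
  linarith [sum_mul_indicator_nonneg hp0 Kᶜ]

theorem one_le_sum_mul_indicator_iff (hp0 : ∀ j, 0 ≤ p j) (hp1 : ∑ j, p j = 1) (K : Set ι) :
    1 ≤ ∑ j, p j * K.indicator (fun _ => 1) j ↔ ∀ j, 0 < p j → j ∈ K := by
  have hsplit := sum_mul_indicator_add_sum_mul_indicator_compl (p := p) K
  have hcompl := sum_mul_indicator_le_zero_iff hp0 Kᶜ
  simp only [Set.mem_compl_iff, not_not] at hcompl
  rw [← hcompl]
  constructor <;> intro h <;> linarith

end StochasticVector

section PaymentFreeShapley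

variable {n : ℕ} {A : Fin n → Type*} {B : ∀ i, A i → Type*}
  [∀ i, Fintype (A i)] [∀ i, Nonempty (A i)] [∀ i a, Fintype (B i a)] [∀ i a, Nonempty (B i a)]
  {P : ∀ i (a : A i), B i a → Fin n → ℝ}

theorem paymentFreeShapley_indic_nonneg (hP0 : ∀ i a b j, 0 ≤ P i a b j) (K : Set (Fin n))
    (i : Fin n) : 0 ≤ paymentFreeShapley P (indic K) i :=
  le_ciInf fun a => Finite.le_ciSup_of_le (Classical.arbitrary _)
    (sum_mul_indicator_nonneg (hP0 i a _) K)

theorem paymentFreeShapley_indic_le_one (hP0 : ∀ i a b j, 0 ≤ P i a b j)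
    (hP1 : ∀ i a b, ∑ j, P i a b j = 1) (K : Set (Fin n)) (i : Fin n) :
    paymentFreeShapley P (indic K) i ≤ 1 :=
  Finite.ciInf_le_of_le (Classical.arbitrary _) <|
    ciSup_le fun b => sum_mul_indicator_le_one (hP0 i _ b) (hP1 i _ b) K

theorem mem_Fminus_paymentFreeShapley_iff (hP0 : ∀ i a b j, 0 ≤ P i a b j)
    (hP1 : ∀ i a b, ∑ j, P i a b j = 1) (I : Set (Fin n)) :
    I ∈ Fminus (paymentFreeShapley P) ↔ ∀ i ∈ I, ∃ a, ∀ b j, 0 < P i a b j → j ∈ I := by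
  refine forall_congr' fun i => ?_
  by_cases hi : i ∈ I
  · rw [indic, Set.indicator_of_notMem (Set.notMem_compl_iff.mpr hi)]
    simp only [hi, true_implies]
    refine Finite.ciInf_le_iff.trans (exists_congr fun a => ?_)
    refine (ciSup_le_iff (Finite.bddAbove_range _)).trans (forall_congr' fun b => ?_)
    simpa using sum_mul_indicator_le_zero_iff (hP0 i a b) Iᶜ
  · simp only [hi, false_imp_iff, iff_true]
    exact (paymentFreeShapley_indic_le_one hP0 hP1 Iᶜ i).trans_eq
      (Set.indicator_of_mem (Set.mem_compl hi) fun _ => (1 : ℝ)).symm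

theorem mem_Fplus_paymentFreeShapley_iff (hP0 : ∀ i a b j, 0 ≤ P i a b j)
    (hP1 : ∀ i a b, ∑ j, P i a b j = 1) (J : Set (Fin n)) :
    J ∈ Fplus (paymentFreeShapley P) ↔ ∀ i ∈ J, ∀ a, ∃ b, ∀ j, 0 < P i a b j → j ∈ J := by
  refine forall_congr' fun i => ?_
  by_cases hi : i ∈ J
  · rw [indic, Set.indicator_of_mem hi]
    simp only [hi, true_implies]
    refine (le_ciInf_iff (Finite.bddBelow_range _)).trans (forall_congr' fun a => ?_)
    refine Finite.le_ciSup_iff.trans (exists_congr fun b => ?_)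
    exact one_le_sum_mul_indicator_iff (hP0 i a b) (hP1 i a b) J
  · simp only [hi, false_imp_iff, iff_true]
    exact (Set.indicator_of_notMem hi _).trans_le (paymentFreeShapley_indic_nonneg hP0 J i)

end PaymentFreeShapley

/-- the families `𝓕⁻` and `𝓕⁺` of invariant faces of a payment-free Shapley
operator are uniquely determined by the supports of the transition probabilities. -/
theorem invariant_faces_depend_only_on_support
    {n : ℕ} {A : Fin n → Type*} {B : ∀ i, A i → Type*}
    [∀ i, Fintype (A i)] [∀ i, Nonempty (A i)]
    [∀ i a, Fintype (B i a)] [∀ i a, Nonempty (B i a)]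
    (P Q : ∀ i (a : A i), B i a → Fin n → ℝ)
    (hP0 : ∀ i a b j, 0 ≤ P i a b j) (hP1 : ∀ i a b, ∑ j, P i a b j = 1)
    (hQ0 : ∀ i a b j, 0 ≤ Q i a b j) (hQ1 : ∀ i a b, ∑ j, Q i a b j = 1)
    (hsupp : ∀ i a b j, 0 < P i a b j ↔ 0 < Q i a b j) :
    Fminus (paymentFreeShapley P) = Fminus (paymentFreeShapley Q) ∧
    Fplus (paymentFreeShapley P) = Fplus (paymentFreeShapley Q) := by
  constructor <;> ext K
  · rw [mem_Fminus_paymentFreeShapley_iff hP0 hP1, mem_Fminus_paymentFreeShapley_iff hQ0 hQ1]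
    simp only [hsupp]
  · rw [mem_Fplus_paymentFreeShapley_iff hP0 hP1, mem_Fplus_paymentFreeShapley_iff hQ0 hQ1]
    simp only [hsupp]
end

section
/- Let E be a finite-dimensional real normed vector space, let C ⊆ E be a nonempty closed convex subset, and let T : C → C be nonexpansive (i.e. ‖T(x) − T(y)‖ ≤ ‖x − y‖ for all x, y ∈ C) with nonempty fixed-point set Fix(T). Then Fix(T) is a nonexpansive retract of C: there exists a nonexpansive map ρ : C → C with ρ(C) = Fix(T) and ρ(x) = x for every x ∈ Fix(T). -/
/-!
The averaged map `S = (I + T) / 2` is nonexpansive on `C` and has the same fixed points as `T`.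
Its orbits are Fejér monotone with respect to `Fix(T)` and asymptotically regular,
`‖T uₙ - uₙ‖ → 0` (Ishikawa; here via the Goebel–Kirk inequality). In finite dimensions an orbit
therefore has a cluster point, which is a fixed point of `T`, and Fejér monotonicity makes it the
limit of the whole orbit. The pointwise limit `ρ = lim Sⁿ` is nonexpansive, fixes `Fix(T)` and
maps `C` onto it.
-/

open Filter Topology Set Function

theorem tendsto_of_antitone_dist_of_tendsto_subseq {X : Type*} [PseudoMetricSpace X]
    {u : ℕ → X} {z : X} (hu : Antitone fun n => dist (u n) z) {φ : ℕ → ℕ} (hφ : StrictMono φ)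
    (hsub : Tendsto (u ∘ φ) atTop (𝓝 z)) : Tendsto u atTop (𝓝 z) := by
  rw [tendsto_iff_dist_tendsto_zero] at hsub ⊢
  exact (tendsto_iff_tendsto_subseq_of_antitone hu hφ.tendsto_atTop).2 hsub

theorem tendsto_zero_of_goebelKirk_le {d : ℕ → ℝ} {M : ℝ} (hd : Antitone d) (hd0 : ∀ n, 0 ≤ d n)
    (hGK : ∀ n i, 2 ^ n * (d (i + n) - d i) + (1 + n / 2) * d i ≤ M) :
    Tendsto d atTop (𝓝 0) := by
  have hbdd : BddBelow (range d) := ⟨0, forall_mem_range.2 hd0⟩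
  set L := ⨅ n, d n
  have hL : Tendsto d atTop (𝓝 L) := tendsto_atTop_ciInf hd hbdd
  have hL0 : 0 ≤ L := le_ciInf hd0
  have hLM : ∀ n : ℕ, (1 + n / 2) * L ≤ M := fun n => by
    have hlim : Tendsto (fun i => 2 ^ n * (d (i + n) - d i) + (1 + n / 2) * d i) atTop
        (𝓝 (2 ^ n * (L - L) + (1 + n / 2) * L)) :=
      (((hL.comp (tendsto_add_atTop_nat n)).sub hL).const_mul _).add (hL.const_mul _)
    simpa using le_of_tendsto' hlim (hGK n)
  suffices L = 0 by rwa [this] at hL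
  by_contra hne
  obtain ⟨n, hn⟩ := exists_nat_gt (2 * M / L)
  have hLpos : 0 < L := lt_of_le_of_ne hL0 (Ne.symm hne)
  rw [div_lt_iff₀ hLpos] at hn
  nlinarith [hLM n]

theorem dist_iterate_le_of_mapsTo {X : Type*} [PseudoMetricSpace X] {C : Set X} {S : X → X}
    (hSC : MapsTo S C C) (hS : ∀ x ∈ C, ∀ y ∈ C, dist (S x) (S y) ≤ dist x y)
    {x y : X} (hx : x ∈ C) (hy : y ∈ C) (n : ℕ) : dist (S^[n] x) (S^[n] y) ≤ dist x y := by
  induction n with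
  | zero => exact le_rfl
  | succ n ih =>
    rw [iterate_succ_apply', iterate_succ_apply']
    exact (hS _ (hSC.iterate n hx) _ (hSC.iterate n hy)).trans ih

theorem antitone_dist_iterate_of_eq_self {X : Type*} [PseudoMetricSpace X] {C : Set X}
    {S : X → X} (hSC : MapsTo S C C) (hS : ∀ x ∈ C, ∀ y ∈ C, dist (S x) (S y) ≤ dist x y)
    {x z : X} (hx : x ∈ C) (hz : z ∈ C) (hSz : S z = z) : Antitone fun n => dist (S^[n] x) z :=
  antitone_nat_of_succ_le fun n =>
    calc dist (S^[n + 1] x) z = dist (S (S^[n] x)) (S z) := by rw [iterate_succ_apply', hSz]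
      _ ≤ dist (S^[n] x) z := hS _ (hSC.iterate n hx) _ hz

theorem exists_nonexpansive_retraction_of_tendsto_iterate {X : Type*} [MetricSpace X]
    {C F : Set X} {S : X → X} (hSC : MapsTo S C C)
    (hS : ∀ x ∈ C, ∀ y ∈ C, dist (S x) (S y) ≤ dist x y) (hFC : F ⊆ C) (hSF : ∀ z ∈ F, S z = z)
    (hlim : ∀ x ∈ C, ∃ z ∈ F, Tendsto (fun n => S^[n] x) atTop (𝓝 z)) :
    ∃ ρ : X → X, MapsTo ρ C C ∧ (∀ x ∈ C, ∀ y ∈ C, dist (ρ x) (ρ y) ≤ dist x y) ∧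
      ρ '' C = F ∧ ∀ z ∈ F, ρ z = z := by
  choose! ρ hρF hρ using hlim
  have hρfix : ∀ z ∈ F, ρ z = z := fun z hz =>
    tendsto_nhds_unique (hρ z (hFC hz)) (by simp [iterate_fixed (hSF z hz)])
  refine ⟨ρ, fun x hx => hFC (hρF x hx), fun x hx y hy => ?_, ?_, hρfix⟩
  · exact le_of_tendsto' ((hρ x hx).dist (hρ y hy)) (dist_iterate_le_of_mapsTo hSC hS hx hy)
  · exact (image_subset_iff.2 hρF).antisymm fun z hz => ⟨z, hFC hz, hρfix z hz⟩

section AveragedMap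

variable {E : Type*} [NormedAddCommGroup E] [NormedSpace ℝ E] {C : Set E} {T : E → E}

noncomputable def averagedMap (T : E → E) (x : E) : E := midpoint ℝ x (T x)

theorem Convex.mapsTo_averagedMap (hC : Convex ℝ C) (hTC : MapsTo T C C) :
    MapsTo (averagedMap T) C C :=
  fun _ hx => hC.midpoint_mem hx (hTC hx)

theorem averagedMap_eq_self {x : E} (hx : T x = x) : averagedMap T x = x := by
  rw [averagedMap, hx, midpoint_self]

theorem dist_averagedMap_le (hT : ∀ x ∈ C, ∀ y ∈ C, dist (T x) (T y) ≤ dist x y) :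
    ∀ x ∈ C, ∀ y ∈ C, dist (averagedMap T x) (averagedMap T y) ≤ dist x y := fun x hx y hy =>
  (dist_midpoint_midpoint_le _ _ _ _).trans (by linarith [hT x hx y hy])

theorem dist_averagedMap_self (x : E) : dist (averagedMap T x) x = dist (T x) x / 2 := by
  rw [averagedMap, dist_midpoint_left, dist_comm]; simp [div_eq_inv_mul]

theorem dist_apply_averagedMap (x : E) : dist (T x) (averagedMap T x) = dist (T x) x / 2 := by
  rw [averagedMap, dist_right_midpoint, dist_comm]; simp [div_eq_inv_mul]

theorem dist_apply_averagedMap_self_le (hT : ∀ x ∈ C, ∀ y ∈ C, dist (T x) (T y) ≤ dist x y)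
    {x : E} (hx : x ∈ C) (hSx : averagedMap T x ∈ C) :
    dist (T (averagedMap T x)) (averagedMap T x) ≤ dist (T x) x :=
  calc dist (T (averagedMap T x)) (averagedMap T x)
      ≤ dist (T (averagedMap T x)) (T x) + dist (T x) (averagedMap T x) := dist_triangle _ _ _
    _ ≤ dist (averagedMap T x) x + dist (T x) (averagedMap T x) := by
      gcongr; exact hT _ hSx _ hx
    _ = dist (T x) x := by rw [dist_averagedMap_self, dist_apply_averagedMap]; ring

theorem antitone_dist_apply_iterate_averagedMap (hS : MapsTo (averagedMap T) C C)
    (hT : ∀ x ∈ C, ∀ y ∈ C, dist (T x) (T y) ≤ dist x y) {x : E} (hx : x ∈ C) :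
    Antitone fun n => dist (T ((averagedMap T)^[n] x)) ((averagedMap T)^[n] x) :=
  antitone_nat_of_succ_le fun n => by
    rw [iterate_succ_apply']
    exact dist_apply_averagedMap_self_le hT (hS.iterate n hx) (hS (hS.iterate n hx))

theorem dist_iterate_averagedMap_self_le (hS : MapsTo (averagedMap T) C C)
    (hT : ∀ x ∈ C, ∀ y ∈ C, dist (T x) (T y) ≤ dist x y) {x : E} (hx : x ∈ C) (n : ℕ) :
    dist ((averagedMap T)^[n] x) x ≤ n / 2 * dist (T x) x := by
  induction n with
  | zero => simp
  | succ n ih =>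
    have hstep : dist ((averagedMap T)^[n + 1] x) ((averagedMap T)^[n] x)
        = dist (T ((averagedMap T)^[n] x)) ((averagedMap T)^[n] x) / 2 := by
      rw [iterate_succ_apply', dist_averagedMap_self]
    have hdisp : dist (T ((averagedMap T)^[n] x)) ((averagedMap T)^[n] x) ≤ dist (T x) x :=
      antitone_dist_apply_iterate_averagedMap hS hT hx (Nat.zero_le n)
    push_cast
    linarith [dist_triangle ((averagedMap T)^[n + 1] x) ((averagedMap T)^[n] x) x,
      (dist_nonneg : 0 ≤ dist (T x) x)]

/-- The Goebel–Kirk inequality. -/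
theorem le_dist_apply_iterate_averagedMap (hS : MapsTo (averagedMap T) C C)
    (hT : ∀ x ∈ C, ∀ y ∈ C, dist (T x) (T y) ≤ dist x y) {x : E} (hx : x ∈ C) (n : ℕ) :
    2 ^ n * (dist (T ((averagedMap T)^[n] x)) ((averagedMap T)^[n] x) - dist (T x) x)
      + (1 + n / 2) * dist (T x) x ≤ dist (T ((averagedMap T)^[n] x)) x := by
  induction n generalizing x with
  | zero => simp
  | succ n ih =>
    set S := averagedMap T
    set A := T (S^[n + 1] x)
    have ih' := ih (hS hx)
    rw [← iterate_succ_apply] at ih'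
    have hmid : dist A (S x) ≤ (dist A x + dist A (T x)) / 2 := by
      change dist A (midpoint ℝ x (T x)) ≤ _
      simpa only [midpoint_self] using dist_midpoint_midpoint_le A A x (T x)
    have hfar : dist A (T x) ≤ (n + 1) / 2 * dist (T x) x := by
      refine (hT _ (hS.iterate _ hx) _ hx).trans ?_
      exact_mod_cast dist_iterate_averagedMap_self_le hS hT hx (n + 1)
    have hdisp := dist_apply_averagedMap_self_le hT hx (hS hx)
    have hpow : (n : ℝ) + 2 ≤ 2 ^ (n + 1) := by exact_mod_cast Nat.lt_two_pow_self (n := n + 1)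
    rw [pow_succ] at hpow ⊢
    push_cast
    nlinarith [mul_nonneg (sub_nonneg.2 hpow) (sub_nonneg.2 hdisp)]

theorem tendsto_dist_apply_iterate_averagedMap (hS : MapsTo (averagedMap T) C C)
    (hT : ∀ x ∈ C, ∀ y ∈ C, dist (T x) (T y) ≤ dist x y) {p : E} (hp : p ∈ C) (hTp : T p = p)
    {x : E} (hx : x ∈ C) :
    Tendsto (fun n => dist (T ((averagedMap T)^[n] x)) ((averagedMap T)^[n] x)) atTop (𝓝 0) := by
  set S := averagedMap T
  have horbit : ∀ n, dist (S^[n] x) p ≤ dist x p := fun n =>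
    antitone_dist_iterate_of_eq_self hS (dist_averagedMap_le hT) hx hp (averagedMap_eq_self hTp)
      (Nat.zero_le n)
  refine tendsto_zero_of_goebelKirk_le (M := 2 * dist x p)
    (antitone_dist_apply_iterate_averagedMap hS hT hx) (fun _ => dist_nonneg) fun n i => ?_
  have hGK := le_dist_apply_iterate_averagedMap hS hT (hS.iterate i hx) n
  rw [← iterate_add_apply, add_comm n i] at hGK
  refine hGK.trans ?_
  calc dist (T (S^[i + n] x)) (S^[i] x)
      ≤ dist (T (S^[i + n] x)) (T p) + dist (S^[i] x) p := by rw [hTp]; exact dist_triangle_right ..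
    _ ≤ dist (S^[i + n] x) p + dist x p := by
      gcongr
      exacts [hT _ (hS.iterate _ hx) _ hp, horbit i]
    _ ≤ 2 * dist x p := by linarith [horbit (i + n)]

theorem exists_tendsto_iterate_averagedMap [ProperSpace E] (hC : IsClosed C)
    (hS : MapsTo (averagedMap T) C C) (hT : ∀ x ∈ C, ∀ y ∈ C, dist (T x) (T y) ≤ dist x y)
    {p : E} (hp : p ∈ C) (hTp : T p = p) {x : E} (hx : x ∈ C) :
    ∃ z ∈ C, T z = z ∧ Tendsto (fun n => (averagedMap T)^[n] x) atTop (𝓝 z) := by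
  set u := fun n => (averagedMap T)^[n] x
  have hu : ∀ n, u n ∈ C := fun n => hS.iterate n hx
  have hfejer : ∀ z ∈ C, T z = z → Antitone fun n => dist (u n) z := fun z hz hTz =>
    antitone_dist_iterate_of_eq_self hS (dist_averagedMap_le hT) hx hz (averagedMap_eq_self hTz)
  obtain ⟨z, -, φ, hφ, hsub⟩ := (isCompact_closedBall p (dist x p)).tendsto_subseq
    fun n => Metric.mem_closedBall.2 (hfejer p hp hTp (Nat.zero_le n))
  have hzC : z ∈ C := hC.mem_of_tendsto hsub (Eventually.of_forall fun k => hu (φ k))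
  have hTz : T z = z := by
    have hcont : ContinuousOn T C :=
      (LipschitzOnWith.of_dist_le' (K := 1) (by simpa using hT)).continuousOn
    have hdisp : Tendsto (fun k => dist (T (u (φ k))) (u (φ k))) atTop (𝓝 (dist (T z) z)) :=
      ((hcont z hzC).tendsto.comp (tendsto_nhdsWithin_iff.2
        ⟨hsub, Eventually.of_forall fun k => hu (φ k)⟩)).dist hsub
    exact dist_eq_zero.1 <| tendsto_nhds_unique hdisp <|
      (tendsto_dist_apply_iterate_averagedMap hS hT hp hTp hx).comp hφ.tendsto_atTop
  exact ⟨z, hzC, hTz, tendsto_of_antitone_dist_of_tendsto_subseq (hfejer z hzC hTz) hφ hsub⟩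

end AveragedMap

theorem fixedPointSet_nonexpansive_retract_general
    {E : Type*} [NormedAddCommGroup E] [NormedSpace ℝ E] [FiniteDimensional ℝ E]
    (C : Set E) (hCclosed : IsClosed C) (hCconv : Convex ℝ C)
    (T : E → E) (hTC : Set.MapsTo T C C)
    (hTne : ∀ x ∈ C, ∀ y ∈ C, ‖T x - T y‖ ≤ ‖x - y‖)
    (hfix : ∃ x ∈ C, T x = x) :
    ∃ ρ : E → E, Set.MapsTo ρ C C ∧
      (∀ x ∈ C, ∀ y ∈ C, ‖ρ x - ρ y‖ ≤ ‖x - y‖) ∧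
      ρ '' C = {x ∈ C | T x = x} ∧
      ∀ x ∈ C, T x = x → ρ x = x := by
  obtain ⟨p, hp, hTp⟩ := hfix
  have hT : ∀ x ∈ C, ∀ y ∈ C, dist (T x) (T y) ≤ dist x y := by
    simpa only [dist_eq_norm] using hTne
  have hS := hCconv.mapsTo_averagedMap hTC
  obtain ⟨ρ, hρC, hρ, hρF, hρfix⟩ := exists_nonexpansive_retraction_of_tendsto_iterate hS
    (dist_averagedMap_le hT) (sep_subset C fun x => T x = x)
    (fun z hz => averagedMap_eq_self hz.2) fun x hx => by
      obtain ⟨z, hz, hTz, hlim⟩ := exists_tendsto_iterate_averagedMap hCclosed hS hT hp hTp hx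
      exact ⟨z, ⟨hz, hTz⟩, hlim⟩
  exact ⟨ρ, hρC, by simpa only [dist_eq_norm] using hρ, hρF, fun x hx hTx => hρfix x ⟨hx, hTx⟩⟩

/-- Bruck: let `E` be a finite-dimensional real normed vector space,
`C ⊆ E` a nonempty closed convex subset, and `T : C → C` a nonexpansive map with a
fixed point.  Then the fixed-point set of `T` is a nonexpansive retract of `C`:
there is a nonexpansive map `ρ : C → C` whose image is exactly `Fix(T)` and which
fixes every point of `Fix(T)`. -/
theorem fixedPointSet_nonexpansive_retract
    {E : Type*} [NormedAddCommGroup E] [NormedSpace ℝ E] [FiniteDimensional ℝ E]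
    (C : Set E) (hCne : C.Nonempty) (hCclosed : IsClosed C) (hCconv : Convex ℝ C)
    (T : E → E) (hTC : Set.MapsTo T C C)
    (hTne : ∀ x ∈ C, ∀ y ∈ C, ‖T x - T y‖ ≤ ‖x - y‖)
    (hfix : ∃ x ∈ C, T x = x) :
    ∃ ρ : E → E, Set.MapsTo ρ C C ∧
      (∀ x ∈ C, ∀ y ∈ C, ‖ρ x - ρ y‖ ≤ ‖x - y‖) ∧
      ρ '' C = {x ∈ C | T x = x} ∧
      ∀ x ∈ C, T x = x → ρ x = x :=
  fixedPointSet_nonexpansive_retract_general C hCclosed hCconv T hTC hTne hfix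
end

section
/- Let M be an n×n matrix over ℝ_max = ℝ ∪ {−∞} with no row identically equal to −∞. Then there exists u ∈ ℝ_max^n with at least one finite entry such that max_{1≤j≤n} (M_{ij} + u_j) = ρ(M) + u_i for every i = 1,…,n, where ρ(M) is the maximal circuit mean of M. -/
/-- The set of average weights of elementary circuits of the precedence graph of a
max-plus matrix `M` (entries in `ℝ ∪ {-∞} = WithBot ℝ`).  An elementary circuit is
given by an injective map `c : Fin (k+1) → Fin n` all of whose cyclically consecutive
arcs are present in `M`. -/
def circuitMeans {n : ℕ} (M : Fin n → Fin n → WithBot ℝ) : Set ℝ :=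
  {m | ∃ (k : ℕ) (c : Fin (k + 1) → Fin n), Function.Injective c ∧
    (∀ l, M (c l) (c (l + 1)) ≠ ⊥) ∧
    m = (∑ l, WithBot.unbotD 0 (M (c l) (c (l + 1)))) / (k + 1)}

/-- The maximal circuit mean `ρ(M)` of a max-plus matrix. -/
noncomputable def maxCircuitMean {n : ℕ} (M : Fin n → Fin n → WithBot ℝ) : ℝ :=
  sSup (circuitMeans M)

/-!
Subtract `ρ = ρ(M)` from every entry of `M`. The resulting matrix `A` has no elementary circuit
of positive weight, and a critical circuit through some node `i` has weight `0`. A walk of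
length `n` contains an elementary circuit, and cutting it out does not decrease the weight, so
the max-plus power `A^n` is dominated by `A* = I ⊕ A ⊕ ⋯ ⊕ A^(n-1)`. Hence
`A ⊗ A* = A ⊕ ⋯ ⊕ A^n` agrees with `A*` except for the term `I`, which in column `i` is
dominated by the critical circuit. So the column `u = A*_{·i}` satisfies `A ⊗ u = u` and
`u_i ≥ 0`, i.e. `M ⊗ u = ρ ⊗ u`.
-/

open Finset

namespace MaxPlus

variable {ι : Type*}

lemma add_finsetSup {α : Type*} (a : WithBot ℝ) (s : Finset α) (f : α → WithBot ℝ) :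
    a + s.sup f = s.sup fun x => a + f x :=
  apply_sup_eq_sup_comp_of_linearOrder (a + ·) (fun _ _ h => add_le_add_right h a)
    (WithBot.add_bot a)

lemma sum_eq_coe_unbotD {α : Type*} (s : Finset α) (f : α → WithBot ℝ)
    (h : ∀ a ∈ s, f a ≠ ⊥) :
    ∑ a ∈ s, f a = ((∑ a ∈ s, (f a).unbotD 0 : ℝ) : WithBot ℝ) := by
  rw [WithBot.coe_sum]
  refine sum_congr rfl fun a ha => ?_
  lift f a to ℝ using h a ha with x
  rfl

def walkWeight (A : ι → ι → WithBot ℝ) (k : ℕ) (p : ℕ → ι) : WithBot ℝ :=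
  ∑ l ∈ range k, A (p l) (p (l + 1))

section Walks

variable (A : ι → ι → WithBot ℝ)

lemma walkWeight_succ (k : ℕ) (p : ℕ → ι) :
    walkWeight A (k + 1) p = A (p 0) (p 1) + walkWeight A k (fun l => p (l + 1)) := by
  rw [walkWeight, sum_range_succ', add_comm]
  rfl

lemma walkWeight_add (k m : ℕ) (p : ℕ → ι) :
    walkWeight A (k + m) p = walkWeight A k p + walkWeight A m (fun l => p (k + l)) := by
  simp only [walkWeight, sum_range_add, add_assoc]

lemma walkWeight_congr {k : ℕ} {p q : ℕ → ι} (h : ∀ l ≤ k, p l = q l) :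
    walkWeight A k p = walkWeight A k q :=
  sum_congr rfl fun l hl => by
    rw [mem_range] at hl
    rw [h l hl.le, h (l + 1) hl]

lemma walkWeight_add_const (c : ℝ) (k : ℕ) (p : ℕ → ι) :
    walkWeight (fun i j => A i j + c) k p = walkWeight A k p + ((k * c : ℝ) : WithBot ℝ) := by
  simp [walkWeight, sum_add_distrib, ← nsmul_eq_mul, WithBot.coe_nsmul]

lemma walkWeight_eq_add_loop {p : ℕ → ι} {a d : ℕ} (h : p (a + d) = p a) (r : ℕ) :
    walkWeight A (a + d + r) p =
      walkWeight A (a + r) (fun l => if l < a then p l else p (l + d)) +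
        walkWeight A d (fun l => p (a + l)) := by
  rw [walkWeight_add, walkWeight_add, walkWeight_add A a r]
  have hhead : walkWeight A a (fun l => if l < a then p l else p (l + d)) = walkWeight A a p :=
    walkWeight_congr A fun l hl => by
      rcases hl.lt_or_eq with hl | rfl
      · simp [hl]
      · simp [h]
  have htail : walkWeight A r (fun l => (fun l => if l < a then p l else p (l + d)) (a + l)) =
      walkWeight A r (fun l => p (a + d + l)) :=
    walkWeight_congr A fun l _ => by
      simp only [Nat.not_lt.2 (Nat.le_add_right a l), if_false]
      ring_nf
  rw [hhead, htail, add_right_comm]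

lemma walkWeight_eq_sum_fin {k : ℕ} (c : Fin (k + 1) → ι) {p : ℕ → ι}
    (hpc : ∀ l : Fin (k + 1), p l = c l) (hp : p (k + 1) = p 0) :
    walkWeight A (k + 1) p = ∑ l, A (c l) (c (l + 1)) := by
  rw [walkWeight, ← Fin.sum_univ_eq_sum_range]
  refine sum_congr rfl fun l _ => ?_
  rw [hpc l, ← hpc (l + 1), Fin.val_add_one]
  split_ifs with hl
  · rw [hl, Fin.val_last, hp]
  · rfl

end Walks

def IsElementaryLoop (d : ℕ) (p : ℕ → ι) : Prop :=
  0 < d ∧ p d = p 0 ∧ Set.InjOn p (Set.Iio d)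

lemma exists_isElementaryLoop [Fintype ι] (p : ℕ → ι) :
    ∃ a d, a + d ≤ Fintype.card ι ∧ IsElementaryLoop d (fun l => p (a + l)) := by
  classical
  have hrep : ∃ d, 0 < d ∧ ∃ a, a + d ≤ Fintype.card ι ∧ p (a + d) = p a := by
    obtain ⟨x, y, hxy, hpxy⟩ := Fintype.exists_ne_map_eq_of_card_lt
      (fun l : Fin (Fintype.card ι + 1) => p l) (by simp)
    rcases Fin.lt_or_lt_of_ne hxy with h | h
    · exact ⟨y - x, by omega, x, by omega, by rw [Nat.add_sub_cancel' h.le]; exact hpxy.symm⟩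
    · exact ⟨x - y, by omega, y, by omega, by rw [Nat.add_sub_cancel' h.le]; exact hpxy⟩
  obtain ⟨hd, a, had, hloop⟩ := Nat.find_spec hrep
  -- a shortest loop among `p 0, …, p (card ι)` is elementary
  have hshorter : ∀ x y, x < y → y < Nat.find hrep → p (a + x) ≠ p (a + y) :=
    fun x y hxy hy he => Nat.find_min hrep (by omega : y - x < Nat.find hrep)
      ⟨by omega, a + x, by omega, by rw [he]; congr 1; omega⟩
  refine ⟨a, Nat.find hrep, had, hd, by simpa using hloop, fun x hx y hy he => ?_⟩
  rcases lt_trichotomy x y with h | h | h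
  · exact absurd he (hshorter x y h hy)
  · exact h
  · exact absurd he.symm (hshorter y x h hx)

section TropicalPowers

variable [Fintype ι] [DecidableEq ι] (A : ι → ι → WithBot ℝ)

def tropPow : ℕ → ι → ι → WithBot ℝ
  | 0, j, i => if j = i then 0 else ⊥
  | k + 1, j, i => univ.sup fun l => A j l + tropPow k l i

lemma tropPow_succ (k : ℕ) (j i : ι) :
    tropPow A (k + 1) j i = univ.sup fun l => A j l + tropPow A k l i := rfl

lemma walkWeight_le_tropPow (k : ℕ) (p : ℕ → ι) :
    walkWeight A k p ≤ tropPow A k (p 0) (p k) := by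
  induction k generalizing p with
  | zero => simp [walkWeight, tropPow]
  | succ k ih =>
    rw [walkWeight_succ, tropPow_succ]
    calc A (p 0) (p 1) + walkWeight A k (fun l => p (l + 1))
        ≤ A (p 0) (p 1) + tropPow A k (p 1) (p (k + 1)) := add_le_add_right (ih _) _
      _ ≤ _ := le_sup (f := fun l => A (p 0) l + tropPow A k l (p (k + 1))) (mem_univ _)

lemma exists_walkWeight_eq_tropPow (k : ℕ) {j i : ι} (h : tropPow A k j i ≠ ⊥) :
    ∃ p : ℕ → ι, p 0 = j ∧ p k = i ∧ walkWeight A k p = tropPow A k j i := by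
  induction k generalizing j with
  | zero =>
    have hji : j = i := by
      by_contra hji
      simp [tropPow, hji] at h
    exact ⟨fun _ => i, hji.symm, rfl, by simp [walkWeight, tropPow, hji]⟩
  | succ k ih =>
    obtain ⟨l, -, hl⟩ :=
      exists_mem_eq_sup univ ⟨j, mem_univ j⟩ fun l => A j l + tropPow A k l i
    rw [tropPow_succ, hl, ne_eq, WithBot.add_eq_bot, not_or] at h
    obtain ⟨q, hq0, hqk, hq⟩ := ih h.2
    refine ⟨fun m => m.casesOn j q, rfl, hqk, ?_⟩
    rw [walkWeight_succ, tropPow_succ, hl, ← hq, ← hq0]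
    rfl

lemma tropPow_card_le_sup (hA : ∀ d p, IsElementaryLoop d p → walkWeight A d p ≤ 0)
    (j i : ι) :
    tropPow A (Fintype.card ι) j i ≤ (range (Fintype.card ι)).sup fun k => tropPow A k j i := by
  by_cases hbot : tropPow A (Fintype.card ι) j i = ⊥
  · simp [hbot]
  obtain ⟨p, rfl, rfl, hp⟩ := exists_walkWeight_eq_tropPow A _ hbot
  obtain ⟨a, d, had, hloop⟩ := exists_isElementaryLoop p
  obtain ⟨r, hr⟩ : ∃ r, Fintype.card ι = a + d + r := ⟨_, (Nat.add_sub_cancel' had).symm⟩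
  set q : ℕ → ι := fun l => if l < a then p l else p (l + d)
  have hpa : p (a + d) = p a := hloop.2.1
  have hq0 : q 0 = p 0 := by
    rcases Nat.eq_zero_or_pos a with rfl | ha
    · simpa [q] using hpa
    · simp [q, ha]
  have hqr : q (a + r) = p (Fintype.card ι) := by
    simp only [q, if_neg (Nat.not_lt.2 (Nat.le_add_right a r)), hr]
    ring_nf
  calc tropPow A (Fintype.card ι) (p 0) (p (Fintype.card ι))
      = walkWeight A (a + d + r) p := by rw [← hp, hr]
    _ = walkWeight A (a + r) q + walkWeight A d (fun l => p (a + l)) :=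
        walkWeight_eq_add_loop A hpa r
    _ ≤ walkWeight A (a + r) q := add_le_of_nonpos_right (hA _ _ hloop)
    _ ≤ tropPow A (a + r) (p 0) (p (Fintype.card ι)) := by
        rw [← hq0, ← hqr]
        exact walkWeight_le_tropPow A _ q
    _ ≤ _ := le_sup (f := fun k => tropPow A k (p 0) (p (Fintype.card ι)))
        (mem_range.2 (by have := hloop.1; omega))

theorem exists_tropical_fixed_vector
    (hA : ∀ d p, IsElementaryLoop d p → walkWeight A d p ≤ 0)
    {d : ℕ} {c : ℕ → ι} (hd : 0 < d) (hdc : d ≤ Fintype.card ι) (hc : c d = c 0)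
    (hcw : 0 ≤ walkWeight A d c) :
    ∃ u : ι → WithBot ℝ, u (c 0) ≠ ⊥ ∧
      ∀ j, (univ.sup fun l => A j l + u l) = u j := by
  set N := Fintype.card ι
  set i := c 0
  set u : ι → WithBot ℝ := fun j => (range N).sup fun k => tropPow A k j i
  have hu : ∀ j, (range (N + 1)).sup (fun k => tropPow A k j i) = u j := fun j => by
    rw [range_add_one, sup_insert, sup_eq_right.2 (tropPow_card_le_sup A hA j i)]
  have hAu : ∀ j, (range (N + 1)).sup (fun k => tropPow A k j i) =
      univ.sup fun l => A j l + u l := fun j => by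
    have hshift : (univ.sup fun l => A j l + u l) =
        (range N).sup fun k => tropPow A (k + 1) j i := by
      simp only [u, add_finsetSup, tropPow_succ]
      exact Finset.sup_comm _ _ _
    have h0 : tropPow A 0 j i ≤ (range N).sup fun k => tropPow A (k + 1) j i := by
      by_cases hji : j = i
      · calc tropPow A 0 j i = 0 := by simp [tropPow, hji]
          _ ≤ walkWeight A d c := hcw
          _ ≤ tropPow A (d - 1 + 1) j i := by
            rw [Nat.sub_add_cancel hd, hji]
            simpa only [hc] using walkWeight_le_tropPow A d c
          _ ≤ _ := le_sup (f := fun k => tropPow A (k + 1) j i) (mem_range.2 (by omega))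
      · simp [tropPow, hji]
    rw [hshift, range_add_one', sup_insert, sup_map]
    exact sup_eq_right.2 h0
  refine ⟨u, ?_, fun j => by rw [← hAu, hu]⟩
  have hui : tropPow A 0 i i ≤ u i :=
    le_sup (f := fun k => tropPow A k i i) (mem_range.2 (by omega))
  simp only [tropPow] at hui
  exact ne_bot_of_le_ne_bot WithBot.zero_ne_bot hui

end TropicalPowers

section CircuitMeans

variable {n : ℕ} (M : Fin n → Fin n → WithBot ℝ)

lemma circuitMeans_finite : (circuitMeans M).Finite := by
  have hsub : circuitMeans M ⊆ Set.range fun x : Σ k : Fin n, (Fin (k.1 + 1) → Fin n) =>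
      (∑ l, WithBot.unbotD 0 (M (x.2 l) (x.2 (l + 1)))) / ((x.1.1 : ℝ) + 1) := by
    rintro m ⟨k, c, hc, -, rfl⟩
    have hk : k + 1 ≤ n := by simpa using Fintype.card_le_of_injective c hc
    exact ⟨⟨⟨k, by omega⟩, c⟩, rfl⟩
  exact (Set.finite_range _).subset hsub

lemma exists_mem_circuitMeans_of_isElementaryLoop {d : ℕ} {p : ℕ → Fin n}
    (hp : IsElementaryLoop d p) (hw : walkWeight M d p ≠ ⊥) :
    ∃ m ∈ circuitMeans M, walkWeight M d p = ((d * m : ℝ) : WithBot ℝ) := by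
  obtain ⟨hd, hpd, hinj⟩ := hp
  obtain ⟨k, rfl⟩ : ∃ k, d = k + 1 := ⟨d - 1, by omega⟩
  set c : Fin (k + 1) → Fin n := fun l => p l
  have hsum := walkWeight_eq_sum_fin M c (p := p) (fun _ => rfl) hpd
  have harc : ∀ l, M (c l) (c (l + 1)) ≠ ⊥ := fun l hl =>
    hw (hsum ▸ WithBot.sum_eq_bot_iff.2 ⟨l, mem_univ l, hl⟩)
  have hcinj : Function.Injective c := fun a b hab =>
    Fin.ext (hinj (Set.mem_Iio.2 a.2) (Set.mem_Iio.2 b.2) hab)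
  refine ⟨_, ⟨k, c, hcinj, harc, rfl⟩, ?_⟩
  rw [hsum, sum_eq_coe_unbotD _ _ fun l _ => harc l]
  congr 1
  push_cast
  field_simp

lemma walkWeight_le_maxCircuitMean {d : ℕ} {p : ℕ → Fin n} (hp : IsElementaryLoop d p) :
    walkWeight M d p ≤ ((d * maxCircuitMean M : ℝ) : WithBot ℝ) := by
  by_cases hw : walkWeight M d p = ⊥
  · simp [hw]
  obtain ⟨m, hm, hpm⟩ := exists_mem_circuitMeans_of_isElementaryLoop M hp hw
  rw [hpm, WithBot.coe_le_coe]
  exact mul_le_mul_of_nonneg_left (le_csSup (circuitMeans_finite M).bddAbove hm) d.cast_nonneg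

lemma circuitMeans_nonempty (hn : 0 < n) (hM : ∀ i, ∃ j, M i j ≠ ⊥) :
    (circuitMeans M).Nonempty := by
  choose s hs using hM
  set v : ℕ → Fin n := fun l => s^[l] ⟨0, hn⟩
  have hv : ∀ l, M (v l) (v (l + 1)) ≠ ⊥ := fun l => by
    simp only [v, Function.iterate_succ_apply']
    exact hs _
  obtain ⟨a, d, -, hloop⟩ := exists_isElementaryLoop v
  have hw : walkWeight M d (fun l => v (a + l)) ≠ ⊥ := fun h => by
    obtain ⟨l, -, hl⟩ := WithBot.sum_eq_bot_iff.1 h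
    exact hv (a + l) hl
  obtain ⟨m, hm, -⟩ := exists_mem_circuitMeans_of_isElementaryLoop M hloop hw
  exact ⟨m, hm⟩

open Fin.NatCast in
lemma exists_walkWeight_eq_maxCircuitMean (hn : 0 < n) (hM : ∀ i, ∃ j, M i j ≠ ⊥) :
    ∃ (d : ℕ) (c : ℕ → Fin n), 0 < d ∧ d ≤ n ∧ c d = c 0 ∧
      walkWeight M d c = ((d * maxCircuitMean M : ℝ) : WithBot ℝ) := by
  obtain ⟨k, c, hc, harc, hρ⟩ :=
    (circuitMeans_nonempty M hn hM).csSup_mem (circuitMeans_finite M)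
  refine ⟨k + 1, fun l => c l, k.succ_pos, by simpa using Fintype.card_le_of_injective c hc,
    by simp, ?_⟩
  rw [walkWeight_eq_sum_fin M c (fun l => by simp) (by simp),
    sum_eq_coe_unbotD _ _ fun l _ => harc l, maxCircuitMean, hρ]
  congr 1
  push_cast
  field_simp

end CircuitMeans

end MaxPlus

open MaxPlus

/-- a max-plus matrix with no row identically `-∞` has a tropical
eigenvector, with at least one finite entry, associated with the tropical eigenvalue
`ρ(M)`: `max_j (M_{ij} + u_j) = ρ(M) + u_i` for every `i`. -/
theorem exists_tropical_eigenvector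
    {n : ℕ} (hn : 0 < n) (M : Fin n → Fin n → WithBot ℝ)
    (hM : ∀ i, ∃ j, M i j ≠ ⊥) :
    ∃ u : Fin n → WithBot ℝ, (∃ i, u i ≠ ⊥) ∧
      ∀ i, (Finset.univ.sup'
          (Finset.univ_nonempty_iff.mpr (Fin.pos_iff_nonempty.mp hn))
          fun j => M i j + u j)
        = (maxCircuitMean M : WithBot ℝ) + u i := by
  set ρ := maxCircuitMean M
  set A : Fin n → Fin n → WithBot ℝ := fun i j => M i j + ((-ρ : ℝ) : WithBot ℝ)
  have hA : ∀ d p, IsElementaryLoop d p → walkWeight A d p ≤ 0 := fun d p hp => by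
    rw [walkWeight_add_const]
    calc walkWeight M d p + ((d * -ρ : ℝ) : WithBot ℝ)
        ≤ ((d * ρ : ℝ) : WithBot ℝ) + ((d * -ρ : ℝ) : WithBot ℝ) :=
          add_le_add_left (walkWeight_le_maxCircuitMean M hp) _
      _ = 0 := by rw [← WithBot.coe_add, mul_neg, add_neg_cancel, WithBot.coe_zero]
  obtain ⟨d, c, hd, hdn, hc, hcw⟩ := exists_walkWeight_eq_maxCircuitMean M hn hM
  have hcA : walkWeight A d c = 0 := by
    rw [walkWeight_add_const, hcw, ← WithBot.coe_add, mul_neg, add_neg_cancel, WithBot.coe_zero]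
  obtain ⟨u, hu, hAu⟩ := exists_tropical_fixed_vector A hA hd (by simpa using hdn) hc hcA.ge
  refine ⟨u, ⟨c 0, hu⟩, fun i => ?_⟩
  rw [sup'_eq_sup, ← hAu i, add_finsetSup]
  refine sup_congr rfl fun j _ => ?_
  rw [← add_assoc, add_comm (ρ : WithBot ℝ), add_assoc (M i j), ← WithBot.coe_add,
    neg_add_cancel, WithBot.coe_zero, add_zero]
end

section
/- Let T : ℝⁿ → ℝⁿ be monotone and additively homogeneous, and suppose T has an invariant half-line: there exist x, ν ∈ ℝⁿ and t₀ ∈ ℝ such that T(x + tν) = x + (t + 1)ν for every t ≥ t₀. Then for every y ∈ ℝⁿ, lim_{k → ∞} T^k(y)/k = ν; in particular, the mean payoff vector χ(T) := lim_{k → ∞} T^k(0)/k exists and equals ν. -/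
/-!
A monotone, additively homogeneous self-map of `ℝⁿ` is nonexpansive for the sup norm: from
`a ≤ b + ‖a - b‖ • 1` one gets `T a ≤ T b + ‖a - b‖ • 1`, and symmetrically. Every orbit therefore
stays within bounded distance of the orbit of the point `x + t₀ • ν` of the invariant half-line,
which moves by exactly `ν` at each step.
-/

open Filter Topology

section Nonexpansive

variable {ι : Type*} [Fintype ι]

theorem le_add_dist_smul_one (a b : ι → ℝ) : a ≤ b + dist a b • (1 : ι → ℝ) := fun i => by
  have h := dist_le_pi_dist a b i
  rw [Real.dist_eq] at h
  simp only [Pi.add_apply, Pi.smul_apply, Pi.one_apply, smul_eq_mul, mul_one]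
  linarith [le_abs_self (a i - b i)]

theorem dist_le_of_le_add_smul_one {a b : ι → ℝ} {d : ℝ} (hd : 0 ≤ d)
    (hab : a ≤ b + d • (1 : ι → ℝ)) (hba : b ≤ a + d • (1 : ι → ℝ)) : dist a b ≤ d := by
  refine (dist_pi_le_iff hd).2 fun i => ?_
  have h₁ := hab i
  have h₂ := hba i
  simp only [Pi.add_apply, Pi.smul_apply, Pi.one_apply, smul_eq_mul, mul_one] at h₁ h₂
  rw [Real.dist_eq, abs_sub_le_iff]
  constructor <;> linarith

theorem lipschitzWith_one_of_monotone_of_map_add_smul_one {T : (ι → ℝ) → ι → ℝ}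
    (hmon : Monotone T) (hah : ∀ (x : ι → ℝ) (c : ℝ), T (x + c • (1 : ι → ℝ)) = T x + c • 1) :
    LipschitzWith 1 T := by
  have hle (a b : ι → ℝ) : T a ≤ T b + dist a b • (1 : ι → ℝ) :=
    hah b _ ▸ hmon (le_add_dist_smul_one a b)
  refine LipschitzWith.of_dist_le_mul fun a b => ?_
  rw [NNReal.coe_one, one_mul]
  exact dist_le_of_le_add_smul_one dist_nonneg (hle a b) (dist_comm a b ▸ hle b a)

end Nonexpansive

section Orbits

variable {E : Type*}

theorem iterate_eq_add_smul_of_halfLine [AddCommGroup E] [Module ℝ E] {T : E → E} {x ν : E}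
    {t₀ : ℝ} (hhalf : ∀ t : ℝ, t₀ ≤ t → T (x + t • ν) = x + (t + 1) • ν) (k : ℕ) :
    T^[k] (x + t₀ • ν) = x + t₀ • ν + (k : ℝ) • ν := by
  induction k with
  | zero => simp
  | succ k ih =>
    rw [Function.iterate_succ_apply', ih, add_assoc, ← add_smul,
      hhalf _ (le_add_of_nonneg_right k.cast_nonneg)]
    push_cast
    module

variable [NormedAddCommGroup E] [NormedSpace ℝ E]

theorem tendsto_inv_smul_of_norm_sub_smul_le {f : ℕ → E} {ν : E} {C : ℝ}
    (hf : ∀ k : ℕ, ‖f k - (k : ℝ) • ν‖ ≤ C) :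
    Tendsto (fun k : ℕ => (k : ℝ)⁻¹ • f k) atTop (𝓝 ν) := by
  have hsmall : Tendsto (fun k : ℕ => (k : ℝ)⁻¹ • (f k - (k : ℝ) • ν)) atTop (𝓝 0) :=
    (tendsto_inv_atTop_zero.comp tendsto_natCast_atTop_atTop).zero_smul_isBoundedUnder_le
      ⟨C, eventually_map.2 (Eventually.of_forall hf)⟩
  refine (zero_add ν ▸ hsmall.add_const ν).congr' ?_
  filter_upwards [eventually_ne_atTop 0] with k hk
  rw [smul_sub, smul_smul, inv_mul_cancel₀ (Nat.cast_ne_zero.2 hk), one_smul, sub_add_cancel]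

theorem tendsto_inv_smul_iterate_of_lipschitzWith_one {T : E → E} (hT : LipschitzWith 1 T)
    {z ν : E} (hz : ∀ k : ℕ, T^[k] z = z + (k : ℝ) • ν) (y : E) :
    Tendsto (fun k : ℕ => (k : ℝ)⁻¹ • T^[k] y) atTop (𝓝 ν) := by
  refine tendsto_inv_smul_of_norm_sub_smul_le (C := dist y z + ‖z‖) fun k => ?_
  have hdist : dist (T^[k] y) (T^[k] z) ≤ dist y z := by
    simpa using (hT.iterate k).dist_le_mul y z
  calc ‖T^[k] y - (k : ℝ) • ν‖ = ‖(T^[k] y - T^[k] z) + z‖ := by rw [hz]; abel_nf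
    _ ≤ dist (T^[k] y) (T^[k] z) + ‖z‖ := by rw [dist_eq_norm]; exact norm_add_le _ _
    _ ≤ dist y z + ‖z‖ := by gcongr

end Orbits

/-- if a monotone additively homogeneous operator `T : ℝⁿ → ℝⁿ` has an
invariant half-line, i.e. `T(x + tν) = x + (t+1)ν` for all `t ≥ t₀`, then
`T^k(y)/k → ν` for every `y`; in particular the mean payoff vector
`χ(T) = lim T^k(0)/k` exists and equals `ν`. -/
theorem meanPayoff_of_invariant_halfLine
    {n : ℕ} (T : (Fin n → ℝ) → (Fin n → ℝ))
    (hmon : Monotone T)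
    (hah : ∀ (x : Fin n → ℝ) (c : ℝ), T (x + c • (1 : Fin n → ℝ)) = T x + c • (1 : Fin n → ℝ))
    (x ν : Fin n → ℝ) (t₀ : ℝ)
    (hhalf : ∀ t : ℝ, t₀ ≤ t → T (x + t • ν) = x + (t + 1) • ν) :
    (∀ y : Fin n → ℝ, Tendsto (fun k : ℕ => (k : ℝ)⁻¹ • T^[k] y) atTop (nhds ν)) ∧
    Tendsto (fun k : ℕ => (k : ℝ)⁻¹ • T^[k] 0) atTop (nhds ν) := by
  have hT : LipschitzWith 1 T := lipschitzWith_one_of_monotone_of_map_add_smul_one hmon hah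
  have hspeed := tendsto_inv_smul_iterate_of_lipschitzWith_one hT
    (iterate_eq_add_smul_of_halfLine hhalf)
  exact ⟨hspeed, hspeed 0⟩
end
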